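/- arXiv:2109.04394 — 5 statements merged into one kernel-verified Lean document; each statement's English description precedes it below -/
import Mathlib

section
/- Let d ≥ 2 and m ≥ 2 be integers, ε > 0, κ₁ > 0, κ₃ > 0, and R ∈ (0, 1]. Let h, h₁ : B'_{2R} → ℝ be differentiable with |∇h₁(x')| ≤ κ₃|x'|^{m−1} and |∇h(x')| ≤ κ₃|x'|^{m−1} for all x' ∈ B'_{2R}, and set δ(x') = ε + h₁(x') − h(x'); assume δ(x') ≥ ε + κ₁|x'|^m on B'_{2R}. Then there exists a constant ϑ > 0 depending only on m, κ₁, κ₃ (one may take ϑ = 1/(2^{m+1} κ₃ max{1, κ₁^{1/m − 1}}) when this quantity is at most 1) such that for every z' with |z'| ≤ R, every s with 0 < s ≤ min{R, ϑ·δ(z')^{1/m}}, and every x' ∈ B'_{2R} with |x' − z'| ≤ s, one has |δ(x') − δ(z')| ≤ δ(z')/2, and hence (1/2)δ(z') ≤ δ(x') ≤ (3/2)δ(z'). -/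
/-- Stability of the gap width `δ(x') = ε + h₁(x') − h(x')` in a narrow region:
there is `ϑ > 0` (depending only on `m, κ₁, κ₃`) such that for `|z'| ≤ R` and
`0 < s ≤ min{R, ϑ δ(z')^{1/m}}`, one has `|δ(x') − δ(z')| ≤ δ(z')/2`
and hence `δ(z')/2 ≤ δ(x') ≤ (3/2)δ(z')` whenever `|x' − z'| ≤ s`. -/
theorem stmt2 (d m : ℕ) (hd : 2 ≤ d) (hm : 2 ≤ m)
    (ε κ₁ κ₃ R : ℝ) (hε : 0 < ε) (hκ₁ : 0 < κ₁) (hκ₃ : 0 < κ₃)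
    (hR : 0 < R) (hR1 : R ≤ 1)
    (h h₁ : EuclideanSpace ℝ (Fin (d - 1)) → ℝ)
    (hdiff : DifferentiableOn ℝ h (Metric.ball 0 (2 * R)))
    (hdiff₁ : DifferentiableOn ℝ h₁ (Metric.ball 0 (2 * R)))
    (hgrad : ∀ x ∈ Metric.ball (0 : EuclideanSpace ℝ (Fin (d - 1))) (2 * R),
      ‖fderiv ℝ h x‖ ≤ κ₃ * ‖x‖ ^ (m - 1))
    (hgrad₁ : ∀ x ∈ Metric.ball (0 : EuclideanSpace ℝ (Fin (d - 1))) (2 * R),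
      ‖fderiv ℝ h₁ x‖ ≤ κ₃ * ‖x‖ ^ (m - 1))
    (δ : EuclideanSpace ℝ (Fin (d - 1)) → ℝ)
    (hδ : ∀ x, δ x = ε + h₁ x - h x)
    (hδlow : ∀ x ∈ Metric.ball (0 : EuclideanSpace ℝ (Fin (d - 1))) (2 * R),
      ε + κ₁ * ‖x‖ ^ m ≤ δ x) :
    ∃ ϑ : ℝ, 0 < ϑ ∧
      ∀ z : EuclideanSpace ℝ (Fin (d - 1)), ‖z‖ ≤ R →
      ∀ s : ℝ, 0 < s → s ≤ min R (ϑ * (δ z) ^ (1 / (m : ℝ))) →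
      ∀ x ∈ Metric.ball (0 : EuclideanSpace ℝ (Fin (d - 1))) (2 * R), ‖x - z‖ ≤ s →
        |δ x - δ z| ≤ δ z / 2 ∧ δ z / 2 ≤ δ x ∧ δ x ≤ 3 / 2 * δ z := by
  classical
  set A : ℝ := (1 / κ₁) ^ ((1 : ℝ) / m) + 1 with hA
  have hmR : (0:ℝ) < m := by positivity
  have hApos : 0 < A := by positivity
  have hAm : 0 < A ^ (m - 1) := by positivity
  refine ⟨min 1 ((4 * κ₃ * A ^ (m - 1))⁻¹), by positivity, ?_⟩
  intro z hz s hs hsle x hx hxz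
  set ϑ : ℝ := min 1 ((4 * κ₃ * A ^ (m - 1))⁻¹) with hϑdef
  have hzball : z ∈ Metric.ball (0 : EuclideanSpace ℝ (Fin (d - 1))) (2 * R) := by
    rw [Metric.mem_ball, dist_zero_right]; linarith
  have hδzpos : 0 < δ z := by
    have := hδlow z hzball
    nlinarith [pow_nonneg (norm_nonneg z) m]
  set e : ℝ := δ z ^ ((1 : ℝ) / m) with he
  have hepos : 0 < e := Real.rpow_pos_of_pos hδzpos _
  have hsϑ : s ≤ ϑ * e := le_trans hsle (min_le_right _ _)
  -- MVT bound on the convex set S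
  set C : ℝ := 2 * κ₃ * (‖z‖ + s) ^ (m - 1) with hC
  have hCnn : 0 ≤ C := by positivity
  have key : ‖δ x - δ z‖ ≤ C * ‖x - z‖ := by
    set S := Metric.closedBall z s ∩ Metric.ball (0 : EuclideanSpace ℝ (Fin (d - 1))) (2 * R)
      with hS
    have hconv : Convex ℝ S := (convex_closedBall _ _).inter (convex_ball _ _)
    have hdz : z ∈ S := ⟨Metric.mem_closedBall_self hs.le, hzball⟩
    have hdx : x ∈ S := ⟨by rw [Metric.mem_closedBall, dist_eq_norm]; exact hxz, hx⟩
    have hδeq : δ = fun y => ε + h₁ y - h y := funext hδ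
    have hdiffδ : ∀ y ∈ S, DifferentiableAt ℝ δ y := by
      intro y hy
      have h1 : DifferentiableAt ℝ h y :=
        hdiff.differentiableAt (Metric.isOpen_ball.mem_nhds hy.2)
      have h2 : DifferentiableAt ℝ h₁ y :=
        hdiff₁.differentiableAt (Metric.isOpen_ball.mem_nhds hy.2)
      rw [hδeq]
      exact ((differentiableAt_const _).add h2).sub h1
    have hbound : ∀ y ∈ S, ‖fderiv ℝ δ y‖ ≤ C := by
      intro y hy
      have h1 : DifferentiableAt ℝ h y :=
        hdiff.differentiableAt (Metric.isOpen_ball.mem_nhds hy.2)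
      have h2 : DifferentiableAt ℝ h₁ y :=
        hdiff₁.differentiableAt (Metric.isOpen_ball.mem_nhds hy.2)
      have hfd : fderiv ℝ δ y = fderiv ℝ h₁ y - fderiv ℝ h y := by
        rw [hδeq, fderiv_fun_sub (f := fun y => ε + h₁ y) ((differentiableAt_const _).add h2) h1, fderiv_const_add]
      have hyn : ‖y‖ ≤ ‖z‖ + s := by
        have h3 : ‖y - z‖ ≤ s := by
          have := hy.1; rwa [Metric.mem_closedBall, dist_eq_norm] at this
        calc ‖y‖ = ‖z + (y - z)‖ := by rw [add_sub_cancel]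
          _ ≤ ‖z‖ + ‖y - z‖ := norm_add_le _ _
          _ ≤ ‖z‖ + s := by linarith
      have hpow : ‖y‖ ^ (m - 1) ≤ (‖z‖ + s) ^ (m - 1) :=
        pow_le_pow_left₀ (norm_nonneg _) hyn _
      calc ‖fderiv ℝ δ y‖ ≤ ‖fderiv ℝ h₁ y‖ + ‖fderiv ℝ h y‖ := by
            rw [hfd]; exact norm_sub_le _ _
        _ ≤ κ₃ * ‖y‖ ^ (m - 1) + κ₃ * ‖y‖ ^ (m - 1) :=
            add_le_add (hgrad₁ y hy.2) (hgrad y hy.2)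
        _ ≤ C := by rw [hC]; nlinarith
    exact hconv.norm_image_sub_le_of_norm_fderiv_le hdiffδ hbound hdz hdx
  -- bound ‖z‖
  have hzbound : ‖z‖ ≤ (1 / κ₁) ^ ((1 : ℝ) / m) * e := by
    have h1 : κ₁ * ‖z‖ ^ m ≤ δ z := by
      have := hδlow z hzball; linarith
    have h2 : ‖z‖ ^ m ≤ δ z / κ₁ := (le_div_iff₀' hκ₁).mpr h1
    have h3 : ((‖z‖ ^ m : ℝ)) ^ ((1 : ℝ) / m) ≤ (δ z / κ₁) ^ ((1 : ℝ) / m) :=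
      Real.rpow_le_rpow (by positivity) h2 (by positivity)
    rw [one_div, Real.pow_rpow_inv_natCast (norm_nonneg z) (by omega)] at h3
    calc ‖z‖ ≤ (δ z / κ₁) ^ ((m : ℝ))⁻¹ := h3
      _ = (1 / κ₁) ^ ((1 : ℝ) / m) * e := by
          rw [div_eq_mul_one_div (δ z) κ₁,
            Real.mul_rpow hδzpos.le (by positivity), he, one_div, one_div]
          ring
  have hϑ1 : ϑ ≤ 1 := min_le_left _ _
  have hϑnn : 0 ≤ ϑ := by positivity
  have hzs : ‖z‖ + s ≤ A * e := by
    have h4 : s ≤ 1 * e := by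
      calc s ≤ ϑ * e := hsϑ
        _ ≤ 1 * e := mul_le_mul_of_nonneg_right hϑ1 hepos.le
    calc ‖z‖ + s ≤ (1 / κ₁) ^ ((1 : ℝ) / m) * e + 1 * e := add_le_add hzbound h4
      _ = A * e := by rw [hA]; ring
  have hee : e ^ (m - 1) * e = δ z := by
    rw [← pow_succ]
    have hm1 : m - 1 + 1 = m := by omega
    rw [hm1, he, one_div, Real.rpow_inv_natCast_pow hδzpos.le (by omega)]
  have hϑ2 : ϑ ≤ (4 * κ₃ * A ^ (m - 1))⁻¹ := min_le_right _ _
  have habs : |δ x - δ z| ≤ δ z / 2 := by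
    have h5 : ‖δ x - δ z‖ ≤ C * s := key.trans (mul_le_mul_of_nonneg_left hxz hCnn)
    have h6 : C * s ≤ 2 * κ₃ * (A * e) ^ (m - 1) * (ϑ * e) := by
      apply mul_le_mul _ hsϑ hs.le (by positivity)
      rw [hC]
      exact mul_le_mul_of_nonneg_left
        (pow_le_pow_left₀ (by positivity) hzs _) (by positivity)
    have h7 : 2 * κ₃ * (A * e) ^ (m - 1) * (ϑ * e) = 2 * κ₃ * A ^ (m - 1) * ϑ * (e ^ (m - 1) * e) := by
      rw [mul_pow]; ring
    have h8 : 2 * κ₃ * A ^ (m - 1) * ϑ ≤ 1 / 2 := by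
      calc 2 * κ₃ * A ^ (m - 1) * ϑ ≤ 2 * κ₃ * A ^ (m - 1) * (4 * κ₃ * A ^ (m - 1))⁻¹ :=
            mul_le_mul_of_nonneg_left hϑ2 (by positivity)
        _ = 1 / 2 := by field_simp; ring
    have h9 : 2 * κ₃ * A ^ (m - 1) * ϑ * δ z ≤ 1 / 2 * δ z :=
      mul_le_mul_of_nonneg_right h8 hδzpos.le
    rw [← Real.norm_eq_abs]
    calc ‖δ x - δ z‖ ≤ C * s := h5
      _ ≤ 2 * κ₃ * A ^ (m - 1) * ϑ * (e ^ (m - 1) * e) := by rw [← h7]; exact h6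
      _ = 2 * κ₃ * A ^ (m - 1) * ϑ * δ z := by rw [hee]
      _ ≤ δ z / 2 := by linarith
  obtain ⟨hl, hr⟩ := abs_le.mp habs
  exact ⟨habs, by linarith, by linarith⟩
end

section
/- Let d ≥ 2, m ≥ 2, k ≥ 0 be integers with m ≥ d + k − 1, and define ρ_k(ε) = ε^{(d+k−1)/m − 1} if m > d + k − 1 and ρ_k(ε) = log(1/ε) if m = d + k − 1. Then there exist constants C ≥ c > 0 depending only on d, k, m such that for all κ > 0 and R > 0 with κR^m ≤ 1, and all ε with 0 < ε ≤ min{1/2, (κR^m)²}, one has c · κ^{−(d+k−1)/m} · ρ_k(ε) ≤ ∫_{B'_R} |x'|^k/(ε + κ|x'|^m) dx' ≤ C · κ^{−(d+k−1)/m} · ρ_k(ε). -/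
open MeasureTheory Set Metric intervalIntegral

open MeasureTheory Set Metric

lemma aux_reduce (n k m : ℕ) (hn : 1 ≤ n) (ε κ R : ℝ) (hε : 0 < ε) (hκ : 0 < κ) (hR : 0 < R) :
    ∫ x in Metric.ball (0 : EuclideanSpace ℝ (Fin n)) R, ‖x‖ ^ k / (ε + κ * ‖x‖ ^ m)
    = ((n : ℝ) * (volume (Metric.ball (0 : EuclideanSpace ℝ (Fin n)) 1)).toReal)
      * ∫ y in (0:ℝ)..R, y ^ (n - 1 + k) / (ε + κ * y ^ m) := by
  haveI : Nonempty (Fin n) := ⟨⟨0, by omega⟩⟩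
  haveI : Nontrivial (EuclideanSpace ℝ (Fin n)) := by
    have : Nontrivial (Fin n → ℝ) := inferInstance
    exact (WithLp.equiv 2 (Fin n → ℝ)).nontrivial
  set g : ℝ → ℝ := Set.indicator (Set.Iio R) (fun r => r ^ k / (ε + κ * r ^ m)) with hg
  have h1 : ∫ x in Metric.ball (0 : EuclideanSpace ℝ (Fin n)) R, ‖x‖ ^ k / (ε + κ * ‖x‖ ^ m)
      = ∫ x : EuclideanSpace ℝ (Fin n), g ‖x‖ := by
    rw [← MeasureTheory.integral_indicator measurableSet_ball]
    congr 1
    funext x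
    by_cases hx : x ∈ Metric.ball (0 : EuclideanSpace ℝ (Fin n)) R
    · rw [Set.indicator_of_mem hx, hg]
      exact (Set.indicator_of_mem (show ‖x‖ ∈ Set.Iio R from mem_ball_zero_iff.1 hx) (fun r => r ^ k / (ε + κ * r ^ m))).symm
    · rw [Set.indicator_of_notMem hx, hg]
      refine (Set.indicator_of_notMem ?_ (fun r => r ^ k / (ε + κ * r ^ m))).symm
      intro h
      exact hx (mem_ball_zero_iff.2 h)
  rw [h1, MeasureTheory.integral_fun_norm_addHaar volume g]
  have hdim : Module.finrank ℝ (EuclideanSpace ℝ (Fin n)) = n := finrank_euclideanSpace_fin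
  rw [hdim]
  have h2 : ∫ y in Set.Ioi (0:ℝ), y ^ (n - 1) • g y
      = ∫ y in (0:ℝ)..R, y ^ (n - 1 + k) / (ε + κ * y ^ m) := by
    have : ∀ y : ℝ, y ^ (n - 1) • g y
        = Set.indicator (Set.Iio R) (fun y => y ^ (n - 1 + k) / (ε + κ * y ^ m)) y := by
      intro y
      rw [hg, smul_eq_mul]
      by_cases hy : y ∈ Set.Iio R
      · rw [Set.indicator_of_mem hy, Set.indicator_of_mem hy, pow_add]
        ring
      · rw [Set.indicator_of_notMem hy, Set.indicator_of_notMem hy, mul_zero]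
    simp_rw [this]
    rw [MeasureTheory.integral_indicator measurableSet_Iio, Measure.restrict_restrict measurableSet_Iio,
      Set.Iio_inter_Ioi, intervalIntegral.integral_of_le hR.le,
      MeasureTheory.integral_Ioc_eq_integral_Ioo]
  rw [h2, nsmul_eq_mul, smul_eq_mul, measureReal_def]
  ring

lemma auxCont (q m : ℕ) (ε κ a b : ℝ) (hε : 0 < ε) (hκ : 0 < κ) (ha : 0 ≤ a) (hab : a ≤ b) :
    IntervalIntegrable (fun y : ℝ => y ^ q / (ε + κ * y ^ m)) volume a b := by
  refine (ContinuousOn.div (by fun_prop) (by fun_prop) ?_).intervalIntegrable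
  intro y hy
  rw [Set.uIcc_of_le hab] at hy
  have hy0 : 0 ≤ y := ha.trans hy.1
  have := add_pos_of_pos_of_nonneg hε (mul_nonneg hκ.le (pow_nonneg hy0 m))
  exact this.ne'

lemma auxNonneg (q m : ℕ) (ε κ a b : ℝ) (hε : 0 < ε) (hκ : 0 < κ) (ha : 0 ≤ a) (hab : a ≤ b) :
    0 ≤ ∫ y in a..b, y ^ q / (ε + κ * y ^ m) := by
  apply intervalIntegral.integral_nonneg hab
  intro y hy
  have hy0 : 0 ≤ y := ha.trans hy.1
  have := add_pos_of_pos_of_nonneg hε (mul_nonneg hκ.le (pow_nonneg hy0 m))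
  positivity

lemma headUB (q m : ℕ) (ε κ t : ℝ) (hε : 0 < ε) (hκ : 0 < κ) (ht : 0 ≤ t) :
    ∫ y in (0:ℝ)..t, y ^ q / (ε + κ * y ^ m) ≤ t ^ (q + 1) / ((q + 1 : ℝ) * ε) := by
  have h1 : ∫ y in (0:ℝ)..t, y ^ q / ε = t ^ (q + 1) / ((q + 1 : ℝ) * ε) := by
    rw [intervalIntegral.integral_div, integral_pow, zero_pow (by omega : q + 1 ≠ 0), sub_zero,
      div_div]
  rw [← h1]
  apply intervalIntegral.integral_mono_on ht (auxCont q m ε κ 0 t hε hκ le_rfl ht)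
    (((continuous_pow q).continuousOn.div_const ε).intervalIntegrable)
  intro y hy
  have hy0 : 0 ≤ y := hy.1
  gcongr <;> first | positivity | nlinarith [mul_nonneg hκ.le (pow_nonneg hy0 m)]

lemma headLB (q m : ℕ) (ε κ t : ℝ) (hε : 0 < ε) (hκ : 0 < κ) (ht0 : 0 ≤ t)
    (ht : κ * t ^ m = ε) :
    t ^ (q + 1) / (2 * (q + 1 : ℝ) * ε) ≤ ∫ y in (0:ℝ)..t, y ^ q / (ε + κ * y ^ m) := by
  have h1 : ∫ y in (0:ℝ)..t, y ^ q / (2 * ε) = t ^ (q + 1) / (2 * (q + 1 : ℝ) * ε) := by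
    rw [intervalIntegral.integral_div, integral_pow, zero_pow (by omega : q + 1 ≠ 0), sub_zero,
      div_div]
    ring_nf
  rw [← h1]
  apply intervalIntegral.integral_mono_on ht0
    (((continuous_pow q).continuousOn.div_const (2 * ε)).intervalIntegrable)
    (auxCont q m ε κ 0 t hε hκ le_rfl ht0)
  intro y hy
  have hy0 : 0 ≤ y := hy.1
  have h2 : κ * y ^ m ≤ κ * t ^ m := by
    gcongr
    exact hy.2
  gcongr <;> first | positivity | nlinarith

lemma tailUB (q m : ℕ) (ε κ t R : ℝ) (hε : 0 < ε) (hκ : 0 < κ) (ht0 : 0 < t) (htR : t ≤ R) :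
    ∫ y in t..R, y ^ q / (ε + κ * y ^ m) ≤ ∫ y in t..R, y ^ ((q : ℤ) - m) / κ := by
  apply intervalIntegral.integral_mono_on htR (auxCont q m ε κ t R hε hκ ht0.le htR)
  · apply ContinuousOn.intervalIntegrable
    apply ContinuousOn.div_const
    intro y hy
    rw [Set.uIcc_of_le htR] at hy
    exact (continuousAt_zpow₀ y _ (Or.inl (ht0.trans_le hy.1).ne')).continuousWithinAt
  · intro y hy
    have hy0 : 0 < y := ht0.trans_le hy.1
    have h1 : y ^ ((q : ℤ) - m) = y ^ q / y ^ m := by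
      rw [zpow_sub₀ hy0.ne', zpow_natCast, zpow_natCast]
    rw [h1, div_div]
    gcongr <;> first | positivity | nlinarith [pow_pos hy0 m, pow_nonneg hy0.le q]

lemma tailUB_gt (q m : ℕ) (hqm : q + 1 < m) (ε κ t R : ℝ) (hε : 0 < ε) (hκ : 0 < κ)
    (ht0 : 0 < t) (htR : t ≤ R) :
    ∫ y in t..R, y ^ q / (ε + κ * y ^ m) ≤ t ^ ((q : ℤ) + 1 - m) / (((m - q - 1 : ℕ) : ℝ) * κ) := by
  refine (tailUB q m ε κ t R hε hκ ht0 htR).trans ?_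
  have h0 : (0:ℝ) ∉ Set.uIcc t R := by
    rw [Set.uIcc_of_le htR]
    intro h
    exact absurd h.1 (not_le.2 ht0)
  have hne : (q : ℤ) - m ≠ -1 := by omega
  have hc : (0:ℝ) < ((m - q - 1 : ℕ) : ℝ) := by
    have : 0 < m - q - 1 := by omega
    exact_mod_cast this
  have he : (q : ℤ) + 1 - m = (q : ℤ) - m + 1 := by ring
  rw [intervalIntegral.integral_div, integral_zpow (Or.inr ⟨hne, h0⟩), he]
  push_cast [Nat.cast_sub (show q ≤ m by omega), Nat.cast_sub (show 1 ≤ m - q by omega)]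
  have hmq : (0:ℝ) < (m:ℝ) - q - 1 := by
    have : ((q:ℝ) + 1) < m := by exact_mod_cast hqm
    linarith
  have hR0 : 0 < R := ht0.trans_le htR
  have hRe : 0 ≤ R ^ ((q:ℤ) - m + 1) := (zpow_pos hR0 _).le
  have h1 : (R ^ ((q:ℤ) - m + 1) - t ^ ((q:ℤ) - m + 1)) / ((q:ℝ) - m + 1)
      = (t ^ ((q:ℤ) - m + 1) - R ^ ((q:ℤ) - m + 1)) / ((m:ℝ) - q - 1) := by
    rw [show ((q:ℝ) - m + 1) = -((m:ℝ) - q - 1) by ring, div_neg, ← neg_div, neg_sub]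
  rw [h1, div_div]
  rw [div_le_div_iff₀ (mul_pos hmq hκ) (mul_pos hmq hκ)]
  nlinarith [mul_nonneg hRe (le_of_lt (mul_pos hmq hκ))]

lemma tailUB_eq (q m : ℕ) (hqm : m = q + 1) (ε κ t R : ℝ) (hε : 0 < ε) (hκ : 0 < κ)
    (ht0 : 0 < t) (htR : t ≤ R) :
    ∫ y in t..R, y ^ q / (ε + κ * y ^ m) ≤ Real.log (R / t) / κ := by
  refine (tailUB q m ε κ t R hε hκ ht0 htR).trans ?_
  have he : ∀ y : ℝ, y ^ ((q : ℤ) - m) = y⁻¹ := by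
    intro y
    rw [hqm]
    push_cast
    rw [show (q : ℤ) - (q + 1) = -1 by ring, zpow_neg_one]
  simp_rw [he]
  rw [intervalIntegral.integral_div, integral_inv_of_pos ht0 (ht0.trans_le htR)]

lemma tailLB_eq (q m : ℕ) (hqm : m = q + 1) (ε κ t R : ℝ) (hε : 0 < ε) (hκ : 0 < κ)
    (ht0 : 0 < t) (htR : t ≤ R) (ht : κ * t ^ m = ε) :
    Real.log (R / t) / (2 * κ) ≤ ∫ y in t..R, y ^ q / (ε + κ * y ^ m) := by
  have hR0 : 0 < R := ht0.trans_le htR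
  have h1 : ∫ y in t..R, y⁻¹ / (2 * κ) = Real.log (R / t) / (2 * κ) := by
    rw [intervalIntegral.integral_div, integral_inv_of_pos ht0 hR0]
  rw [← h1]
  apply intervalIntegral.integral_mono_on htR
  · apply ContinuousOn.intervalIntegrable
    apply ContinuousOn.div_const
    intro y hy
    rw [Set.uIcc_of_le htR] at hy
    exact (continuousAt_inv₀ (ht0.trans_le hy.1).ne').continuousWithinAt
  · exact auxCont q m ε κ t R hε hκ ht0.le htR
  · intro y hy
    have hy0 : 0 < y := ht0.trans_le hy.1
    have h2 : κ * t ^ m ≤ κ * y ^ m := by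
      gcongr
      exact hy.1
    have h3 : ε + κ * y ^ m ≤ 2 * (κ * y ^ m) := by linarith [ht ▸ h2]
    have h4 : y⁻¹ / (2 * κ) = y ^ q / (2 * (κ * y ^ m)) := by
      rw [hqm]
      field_simp
      ring
    rw [h4]
    gcongr <;> first | positivity | nlinarith [pow_nonneg hy0.le q, pow_pos hy0 m, h3, hε]

set_option maxHeartbeats 1000000 in
/-- Two-sided bound on the thin-gap integral `∫_{B'_R} |x'|^k/(ε + κ|x'|^m) dx'`
in the regime `m ≥ d + k − 1`, with rate `ρ_k(ε) = ε^{(d+k−1)/m − 1}` if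
`m > d + k − 1` and `ρ_k(ε) = log(1/ε)` if `m = d + k − 1`. -/
theorem stmt6 (d m k : ℕ) (hd : 2 ≤ d) (hm : 2 ≤ m) (hmk : d + k - 1 ≤ m) :
    ∃ c C : ℝ, 0 < c ∧ c ≤ C ∧
      ∀ κ R ε : ℝ, 0 < κ → 0 < R → κ * R ^ m ≤ 1 →
        0 < ε → ε ≤ min (1 / 2) ((κ * R ^ m) ^ 2) →
        (c * κ ^ (-((d + k - 1 : ℕ) : ℝ) / (m : ℝ)) *
            (if m = d + k - 1 then Real.log (1 / ε)
              else ε ^ (((d + k - 1 : ℕ) : ℝ) / (m : ℝ) - 1)) ≤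
          ∫ x in Metric.ball (0 : EuclideanSpace ℝ (Fin (d - 1))) R,
            ‖x‖ ^ k / (ε + κ * ‖x‖ ^ m)) ∧
        (∫ x in Metric.ball (0 : EuclideanSpace ℝ (Fin (d - 1))) R,
            ‖x‖ ^ k / (ε + κ * ‖x‖ ^ m)) ≤
          C * κ ^ (-((d + k - 1 : ℕ) : ℝ) / (m : ℝ)) *
            (if m = d + k - 1 then Real.log (1 / ε)
              else ε ^ (((d + k - 1 : ℕ) : ℝ) / (m : ℝ) - 1)) := by
  have hn1 : 1 ≤ d - 1 := by omega
  set n := d - 1 with hndef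
  set q := n - 1 + k with hqdef
  have hq1 : d + k - 1 = q + 1 := by omega
  have hm0 : (0:ℝ) < m := by exact_mod_cast Nat.lt_of_lt_of_le Nat.zero_lt_two hm
  set V : ℝ := (n : ℝ) * (volume (Metric.ball (0 : EuclideanSpace ℝ (Fin n)) 1)).toReal
    with hVdef
  have hV : 0 < V := by
    haveI : Nonempty (Fin n) := ⟨⟨0, by omega⟩⟩
    apply mul_pos
    · exact_mod_cast Nat.lt_of_lt_of_le Nat.zero_lt_one hn1
    · rw [ENNReal.toReal_pos_iff]
      exact ⟨measure_ball_pos _ _ one_pos, measure_ball_lt_top⟩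
  -- construction of the critical radius t
  have setup : ∀ κ R ε : ℝ, 0 < κ → 0 < R → κ * R ^ m ≤ 1 → 0 < ε → ε ≤ (κ * R ^ m) ^ 2 →
      ∃ t : ℝ, 0 < t ∧ t ≤ R ∧ t ^ m = ε / κ := by
    intro κ R ε hκ hR hκR hε hεsq
    have hbase : 0 < ε / κ := div_pos hε hκ
    refine ⟨(ε / κ) ^ ((m:ℝ)⁻¹), Real.rpow_pos_of_pos hbase _, ?_,
      Real.rpow_inv_natCast_pow hbase.le (by omega)⟩
    have htm : ((ε / κ) ^ ((m:ℝ)⁻¹)) ^ m = ε / κ :=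
      Real.rpow_inv_natCast_pow hbase.le (by omega)
    have h1 : ((ε / κ) ^ ((m:ℝ)⁻¹)) ^ m ≤ R ^ m := by
      rw [htm, div_le_iff₀ hκ]
      nlinarith [mul_nonneg (mul_pos hκ (pow_pos hR m)).le (sub_nonneg.2 hκR)]
    exact le_of_pow_le_pow_left₀ (by omega) hR.le h1
  by_cases hcase : m = d + k - 1
  · -- logarithmic case : m = q + 1
    have hmq : m = q + 1 := by omega
    have hqm' : ((q:ℝ) + 1) = (m:ℝ) := by exact_mod_cast congrArg (Nat.cast : ℕ → ℝ) hmq.symm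
    refine ⟨V * (1 / (4 * (m:ℝ))), V * (3 / (m:ℝ)), by positivity, ?_, ?_⟩
    · have h34 : (1:ℝ) / (4 * (m:ℝ)) ≤ 3 / (m:ℝ) := by
        rw [div_le_div_iff₀ (by positivity) hm0]
        nlinarith
      nlinarith [hV, h34]
    intro κ R ε hκ hR hκR hε hεmin
    obtain ⟨hε2, hεsq⟩ := le_min_iff.1 hεmin
    obtain ⟨t, ht0, htR, htm⟩ := setup κ R ε hκ hR hκR hε hεsq
    have hκt : κ * t ^ m = ε := by rw [htm]; field_simp
    have hR0m : (0:ℝ) < κ * R ^ m := by positivity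
    set L := Real.log (1 / ε) with hLdef
    have hLε : L = -Real.log ε := by rw [hLdef, one_div, Real.log_inv]
    have hL2 : Real.log 2 ≤ L := by
      apply Real.log_le_log two_pos
      rw [le_div_iff₀ hε]
      linarith
    have hL1 : (1:ℝ) ≤ 2 * L := by
      have := Real.log_two_gt_d9
      linarith
    have hLpos : 0 < L := by
      have := Real.log_two_gt_d9
      linarith
    -- log identity
    have hlogt : (m:ℝ) * Real.log t = Real.log ε - Real.log κ := by
      rw [← Real.log_pow, htm, Real.log_div hε.ne' hκ.ne']
    have hlog : (m:ℝ) * Real.log (R / t) = Real.log (κ * R ^ m) - Real.log ε := by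
      rw [Real.log_div hR.ne' ht0.ne', Real.log_mul hκ.ne' (pow_ne_zero m hR.ne'),
        Real.log_pow]
      linear_combination -hlogt
    have hup : Real.log (κ * R ^ m) ≤ 0 := Real.log_nonpos hR0m.le hκR
    have hsqrt : Real.sqrt ε ≤ κ * R ^ m := by
      have h1 : Real.sqrt ε ≤ Real.sqrt ((κ * R ^ m) ^ 2) := Real.sqrt_le_sqrt hεsq
      rwa [Real.sqrt_sq hR0m.le] at h1
    have hlow : Real.log ε / 2 ≤ Real.log (κ * R ^ m) := by
      have h1 := Real.log_le_log (Real.sqrt_pos.2 hε) hsqrt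
      rwa [Real.log_sqrt hε.le] at h1
    have hlogRt_ub : Real.log (R / t) ≤ L / m := by
      rw [le_div_iff₀ hm0]
      nlinarith [hlog, hup, hLε]
    have hlogRt_lb : L / (2 * m) ≤ Real.log (R / t) := by
      rw [div_le_iff₀ (by positivity)]
      nlinarith [hlog, hlow, hLε]
    -- reduce to the 1-D integral
    rw [if_pos hcase]
    have hred := aux_reduce n k m hn1 ε κ R hε hκ hR
    have hsplit : (∫ y in (0:ℝ)..R, y ^ q / (ε + κ * y ^ m))
        = (∫ y in (0:ℝ)..t, y ^ q / (ε + κ * y ^ m))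
          + ∫ y in t..R, y ^ q / (ε + κ * y ^ m) :=
      (integral_add_adjacent_intervals (auxCont q m ε κ 0 t hε hκ le_rfl ht0.le)
        (auxCont q m ε κ t R hε hκ ht0.le htR)).symm
    have hκpow : κ ^ (-((d + k - 1 : ℕ) : ℝ) / (m : ℝ)) = κ⁻¹ := by
      have hpm : ((d + k - 1 : ℕ) : ℝ) = (m:ℝ) := by exact_mod_cast congrArg (Nat.cast : ℕ → ℝ) hcase.symm
      rw [hpm, neg_div, div_self hm0.ne', Real.rpow_neg_one]
    constructor
    · -- lower bound
      have htail := tailLB_eq q m hmq ε κ t R hε hκ ht0 htR hκt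
      have hhead0 := auxNonneg q m ε κ 0 t hε hκ le_rfl ht0.le
      have hJ : L / (4 * m * κ) ≤ ∫ y in (0:ℝ)..R, y ^ q / (ε + κ * y ^ m) := by
        rw [hsplit]
        have h1 : L / (4 * m * κ) = (L / (2 * m)) / (2 * κ) := by
          rw [div_div]
          congr 1
          ring
        have h2 : (L / (2 * m)) / (2 * κ) ≤ Real.log (R / t) / (2 * κ) := by gcongr
        linarith
      rw [hred, hκpow]
      have heq : V * (1 / (4 * (m:ℝ))) * κ⁻¹ * L = V * (L / (4 * m * κ)) := by
        field_simp
      rw [heq]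
      exact mul_le_mul_of_nonneg_left hJ hV.le
    · -- upper bound
      have hhead := headUB q m ε κ t hε hκ ht0.le
      have htail := tailUB_eq q m hmq ε κ t R hε hκ ht0 htR
      have htq : t ^ (q + 1) = ε / κ := by rw [← hmq]; exact htm
      have hhead' : (∫ y in (0:ℝ)..t, y ^ q / (ε + κ * y ^ m)) ≤ 1 / ((m:ℝ) * κ) := by
        have h1 : t ^ (q + 1) / (((q:ℝ) + 1) * ε) = 1 / ((m:ℝ) * κ) := by
          rw [htq, hqm']
          field_simp
        calc (∫ y in (0:ℝ)..t, y ^ q / (ε + κ * y ^ m))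
            ≤ t ^ (q + 1) / (((q:ℝ) + 1) * ε) := by
              have := hhead
              push_cast at this ⊢
              linarith
          _ = 1 / ((m:ℝ) * κ) := h1
      have htail' : (∫ y in t..R, y ^ q / (ε + κ * y ^ m)) ≤ (L / m) / κ := by
        refine htail.trans ?_
        gcongr
      have hJ : (∫ y in (0:ℝ)..R, y ^ q / (ε + κ * y ^ m)) ≤ 3 * L / (m * κ) := by
        rw [hsplit]
        have hkey : 1 / ((m:ℝ) * κ) + (L / m) / κ ≤ 3 * L / (m * κ) := by
          have h1 : (L / (m:ℝ)) / κ = L / (m * κ) := by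
            rw [div_div]
          rw [h1, ← add_div, div_le_div_iff₀ (by positivity) (by positivity)]
          nlinarith [mul_pos (mul_pos hm0 hκ) hLpos]
        linarith
      rw [hred, hκpow]
      have heq : V * (3 / (m:ℝ)) * κ⁻¹ * L = V * (3 * L / (m * κ)) := by
        field_simp
      rw [heq]
      exact mul_le_mul_of_nonneg_left hJ hV.le
  · -- power case : q + 1 < m
    have hqm : q + 1 < m := by omega
    have hc : (0:ℝ) < ((m - q - 1 : ℕ) : ℝ) := by
      have : 0 < m - q - 1 := by omega
      exact_mod_cast this
    refine ⟨V * (1 / (2 * ((q:ℝ) + 1))), V * (1 / ((q:ℝ) + 1) + 1 / ((m - q - 1 : ℕ) : ℝ)),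
      by positivity, ?_, ?_⟩
    · have h1 : (1:ℝ) / (2 * ((q:ℝ) + 1)) ≤ 1 / ((q:ℝ) + 1) := by
        apply div_le_div_of_nonneg_left one_pos.le (by positivity)
        nlinarith [Nat.cast_nonneg (α := ℝ) q]
      have h2 : (0:ℝ) < 1 / ((m - q - 1 : ℕ) : ℝ) := by positivity
      nlinarith [hV]
    intro κ R ε hκ hR hκR hε hεmin
    obtain ⟨hε2, hεsq⟩ := le_min_iff.1 hεmin
    obtain ⟨t, ht0, htR, htm⟩ := setup κ R ε hκ hR hκR hε hεsq
    have hκt : κ * t ^ m = ε := by rw [htm]; field_simp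
    rw [if_neg hcase]
    have hred := aux_reduce n k m hn1 ε κ R hε hκ hR
    have hsplit : (∫ y in (0:ℝ)..R, y ^ q / (ε + κ * y ^ m))
        = (∫ y in (0:ℝ)..t, y ^ q / (ε + κ * y ^ m))
          + ∫ y in t..R, y ^ q / (ε + κ * y ^ m) :=
      (integral_add_adjacent_intervals (auxCont q m ε κ 0 t hε hκ le_rfl ht0.le)
        (auxCont q m ε κ t R hε hκ ht0.le htR)).symm
    -- identify t^(q+1)/ε with the rate function
    have ht' : t = (ε / κ) ^ ((m:ℝ)⁻¹) := by
      rw [← htm]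
      exact (Real.pow_rpow_inv_natCast ht0.le (by omega)).symm
    have h1 : t ^ (q + 1) = (ε / κ) ^ (((d + k - 1 : ℕ) : ℝ) / (m : ℝ)) := by
      rw [ht', ← Real.rpow_natCast ((ε / κ) ^ ((m:ℝ)⁻¹)) (q + 1),
        ← Real.rpow_mul (div_pos hε hκ).le]
      congr 1
      rw [hq1]
      push_cast
      ring
    have hA : t ^ (q + 1) / ε
        = κ ^ (-((d + k - 1 : ℕ) : ℝ) / (m : ℝ)) * ε ^ (((d + k - 1 : ℕ) : ℝ) / (m : ℝ) - 1) := by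
      rw [h1, Real.div_rpow hε.le hκ.le, Real.rpow_sub hε, Real.rpow_one, neg_div,
        Real.rpow_neg hκ.le]
      ring
    constructor
    · -- lower bound
      have hhead := headLB q m ε κ t hε hκ ht0.le hκt
      have htail0 := auxNonneg q m ε κ t R hε hκ ht0.le htR
      have hJ : t ^ (q + 1) / (2 * ((q:ℝ) + 1) * ε)
          ≤ ∫ y in (0:ℝ)..R, y ^ q / (ε + κ * y ^ m) := by
        rw [hsplit]
        push_cast at hhead
        linarith
      rw [hred]
      have heq : V * (1 / (2 * ((q:ℝ) + 1))) * κ ^ (-((d + k - 1 : ℕ) : ℝ) / (m : ℝ))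
          * ε ^ (((d + k - 1 : ℕ) : ℝ) / (m : ℝ) - 1)
          = V * (t ^ (q + 1) / (2 * ((q:ℝ) + 1) * ε)) := by
        rw [mul_assoc, ← hA]
        field_simp
      rw [heq]
      exact mul_le_mul_of_nonneg_left hJ hV.le
    · -- upper bound
      have hhead := headUB q m ε κ t hε hκ ht0.le
      have htail := tailUB_gt q m hqm ε κ t R hε hκ ht0 htR
      have htail' : t ^ ((q : ℤ) + 1 - m) / (((m - q - 1 : ℕ) : ℝ) * κ)
          = (t ^ (q + 1) / ε) / ((m - q - 1 : ℕ) : ℝ) := by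
        have hz : t ^ ((q : ℤ) + 1 - m) = t ^ (q + 1) / t ^ m := by
          rw [show (q : ℤ) + 1 - m = ((q + 1 : ℕ) : ℤ) - ((m : ℕ) : ℤ) by push_cast; ring,
            zpow_sub₀ ht0.ne', zpow_natCast, zpow_natCast]
        rw [hz, htm]
        field_simp
      have hJ : (∫ y in (0:ℝ)..R, y ^ q / (ε + κ * y ^ m))
          ≤ (1 / ((q:ℝ) + 1) + 1 / ((m - q - 1 : ℕ) : ℝ)) * (t ^ (q + 1) / ε) := by
        rw [hsplit]
        rw [htail'] at htail
        push_cast at hhead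
        have he1 : t ^ (q + 1) / (((q:ℝ) + 1) * ε) = (1 / ((q:ℝ) + 1)) * (t ^ (q + 1) / ε) := by
          field_simp
        have he2 : (t ^ (q + 1) / ε) / ((m - q - 1 : ℕ) : ℝ)
            = (1 / ((m - q - 1 : ℕ) : ℝ)) * (t ^ (q + 1) / ε) := by
          field_simp
        rw [he1] at hhead
        rw [he2] at htail
        nlinarith [hhead, htail]
      rw [hred]
      have heq : V * (1 / ((q:ℝ) + 1) + 1 / ((m - q - 1 : ℕ) : ℝ))
          * κ ^ (-((d + k - 1 : ℕ) : ℝ) / (m : ℝ))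
          * ε ^ (((d + k - 1 : ℕ) : ℝ) / (m : ℝ) - 1)
          = V * ((1 / ((q:ℝ) + 1) + 1 / ((m - q - 1 : ℕ) : ℝ)) * (t ^ (q + 1) / ε)) := by
        rw [mul_assoc, ← hA]
        ring
      rw [heq]
      exact mul_le_mul_of_nonneg_left hJ hV.le
end

section
/- Let τ > 0 and R > 0. Then there exists a constant C > 0 depending only on τ and R such that for all ε ∈ (0, 1], |∫_{−R}^{R} dx/(ε + τx²/2) − (√2·π/√(τε) − 4/(τR))| ≤ C·ε. -/
open Real intervalIntegral

lemma arctan_integral_repr (x : ℝ) :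
    Real.arctan x = ∫ t in (0:ℝ)..x, 1 / (1 + t ^ 2) := by
  rw [integral_one_div_one_add_sq, Real.arctan_zero, sub_zero]

lemma cont_one_div_one_add_sq : Continuous fun t : ℝ => 1 / (1 + t ^ 2) :=
  continuous_const.div (by continuity) fun t => by positivity

lemma arctan_le_self' {x : ℝ} (hx : 0 ≤ x) : Real.arctan x ≤ x := by
  calc Real.arctan x = ∫ t in (0:ℝ)..x, 1 / (1 + t ^ 2) := arctan_integral_repr x
    _ ≤ ∫ _t in (0:ℝ)..x, (1:ℝ) :=
        intervalIntegral.integral_mono_on hx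
          (cont_one_div_one_add_sq.intervalIntegrable _ _) intervalIntegrable_const
          (fun t _ => by rw [div_le_one (by positivity)]; nlinarith [sq_nonneg t])
    _ = x := by simp

lemma self_sub_cube_le_arctan {x : ℝ} (hx : 0 ≤ x) :
    x - x ^ 3 / 3 ≤ Real.arctan x := by
  have h : ∫ t in (0:ℝ)..x, (1 - t ^ 2) = x - x ^ 3 / 3 := by
    rw [intervalIntegral.integral_sub intervalIntegrable_const
      (Continuous.intervalIntegrable (by continuity) _ _)]
    simp [integral_pow]
    norm_num
  calc x - x ^ 3 / 3 = ∫ t in (0:ℝ)..x, (1 - t ^ 2) := h.symm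
    _ ≤ ∫ t in (0:ℝ)..x, 1 / (1 + t ^ 2) :=
        intervalIntegral.integral_mono_on hx
          (Continuous.intervalIntegrable (by continuity) _ _)
          (cont_one_div_one_add_sq.intervalIntegrable _ _)
          (fun t _ => by
            rw [le_div_iff₀ (by positivity)]
            nlinarith [sq_nonneg t, sq_nonneg (t ^ 2)])
    _ = Real.arctan x := (arctan_integral_repr x).symm

/-- Small-ε asymptotics of the thin-gap integral in dimension `d = 2`:
`∫_{−R}^{R} dx/(ε + τx²/2) = √2·π/√(τε) − 4/(τR) + O(ε)`. -/
theorem stmt8 (τ R : ℝ) (hτ : 0 < τ) (hR : 0 < R) :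
    ∃ C : ℝ, 0 < C ∧ ∀ ε : ℝ, 0 < ε → ε ≤ 1 →
      |(∫ x in (-R)..R, 1 / (ε + τ * x ^ 2 / 2)) -
        (Real.sqrt 2 * Real.pi / Real.sqrt (τ * ε) - 4 / (τ * R))| ≤ C * ε := by
  refine ⟨8 / (3 * τ ^ 2 * R ^ 3), by positivity, fun ε hε hε1 => ?_⟩
  set c : ℝ := Real.sqrt (2 * ε / τ) with hc
  have hcpos : 0 < c := Real.sqrt_pos.mpr (by positivity)
  have hc2 : c ^ 2 = 2 * ε / τ := Real.sq_sqrt (by positivity)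
  have hτc : τ * c ^ 2 = 2 * ε := by rw [hc2]; field_simp
  -- exact value of the integral
  have hval : (∫ x in (-R)..R, 1 / (ε + τ * x ^ 2 / 2))
      = (2 * c / ε) * Real.arctan (R / c) := by
    have heq : ∀ x : ℝ, 1 / (ε + τ * x ^ 2 / 2)
        = (1 / ε) * (1 / (1 + (x / c) ^ 2)) := by
      intro x
      have hden : ε + τ * x ^ 2 / 2 = ε * (1 + (x / c) ^ 2) := by
        field_simp
        linear_combination x ^ 2 * hτc
      rw [hden]; field_simp
    calc (∫ x in (-R)..R, 1 / (ε + τ * x ^ 2 / 2))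
        = ∫ x in (-R)..R, (1 / ε) * (1 / (1 + (x / c) ^ 2)) := by
          simp only [heq]
      _ = (1 / ε) * ∫ x in (-R)..R, 1 / (1 + (x / c) ^ 2) := by
          rw [intervalIntegral.integral_const_mul]
      _ = (1 / ε) * (c • ∫ x in (-R/c)..(R/c), 1 / (1 + x ^ 2)) := by
          rw [intervalIntegral.integral_comp_div (fun x => 1 / (1 + x ^ 2)) hcpos.ne']
      _ = (2 * c / ε) * Real.arctan (R / c) := by
          rw [integral_one_div_one_add_sq]
          rw [neg_div, Real.arctan_neg]
          ring_nf
  -- relate π term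
  have hτε : 0 < Real.sqrt (τ * ε) := Real.sqrt_pos.mpr (by positivity)
  have hcε : c * Real.sqrt (τ * ε) = Real.sqrt 2 * ε := by
    rw [hc, ← Real.sqrt_mul (by positivity)]
    have : 2 * ε / τ * (τ * ε) = 2 * ε ^ 2 := by field_simp
    rw [this, Real.sqrt_mul (by norm_num), Real.sqrt_sq hε.le]
  have hpi : (2 * c / ε) * (Real.pi / 2) = Real.sqrt 2 * Real.pi / Real.sqrt (τ * ε) := by
    rw [eq_div_iff hτε.ne']
    have h1 : 2 * c / ε * (Real.pi / 2) * Real.sqrt (τ * ε)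
        = (c * Real.sqrt (τ * ε)) * Real.pi / ε := by ring
    rw [h1, hcε]
    field_simp
  -- arctan flip
  have harc : Real.arctan (R / c) = Real.pi / 2 - Real.arctan (c / R) := by
    have h := Real.arctan_inv_of_pos (show 0 < R / c by positivity)
    rw [show (R / c)⁻¹ = c / R by field_simp] at h
    linarith [h]
  have h4 : (2 * c / ε) * (c / R) = 4 / (τ * R) := by
    field_simp
    linear_combination 2 * hτc
  -- the difference
  have hdiff : (∫ x in (-R)..R, 1 / (ε + τ * x ^ 2 / 2)) -
      (Real.sqrt 2 * Real.pi / Real.sqrt (τ * ε) - 4 / (τ * R))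
      = (2 * c / ε) * (c / R - Real.arctan (c / R)) := by
    rw [hval, harc, ← hpi, ← h4]; ring
  rw [hdiff]
  have hcR : (0:ℝ) ≤ c / R := by positivity
  have hub := arctan_le_self' hcR
  have hlb := self_sub_cube_le_arctan hcR
  have hfac : (0:ℝ) < 2 * c / ε := by positivity
  rw [abs_of_nonneg (by nlinarith)]
  have hbound : (2 * c / ε) * (c / R - Real.arctan (c / R))
      ≤ (2 * c / ε) * ((c / R) ^ 3 / 3) := by
    apply mul_le_mul_of_nonneg_left _ hfac.le
    linarith
  refine hbound.trans (le_of_eq ?_)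
  have hc4 : c ^ 4 = 4 * ε ^ 2 / τ ^ 2 := by
    have h5 : c ^ 4 = (c ^ 2) ^ 2 := by ring
    rw [h5, hc2]; field_simp; ring
  have h6 : (2 * c / ε) * ((c / R) ^ 3 / 3) = 2 * c ^ 4 / (3 * ε * R ^ 3) := by
    field_simp
  rw [h6, hc4]
  field_simp
  ring
end

section
/- Let τ₁, τ₂ > 0 and R > 0, and set K = (8/√(τ₁τ₂)) ∫₀^{π/2} log R(θ) dθ, where R(θ) = (R/√2)·(τ₁^{−1}cos²θ + τ₂^{−1}sin²θ)^{−1/2}. Then there exists C > 0 depending only on τ₁, τ₂, R such that for all ε ∈ (0, 1], |∫_{B'_R} dx'/(ε + τ₁x₁²/2 + τ₂x₂²/2) − (2π/√(τ₁τ₂))·log(1/ε) − K| ≤ C·ε. -/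
open Real MeasureTheory Set

noncomputable def qq (τ₁ τ₂ θ : ℝ) : ℝ := τ₁⁻¹ * Real.cos θ ^ 2 + τ₂⁻¹ * Real.sin θ ^ 2
noncomputable def rr (τ₁ τ₂ R θ : ℝ) : ℝ := (R / Real.sqrt 2) / Real.sqrt (qq τ₁ τ₂ θ)

lemma qq_cont (τ₁ τ₂ : ℝ) : Continuous (qq τ₁ τ₂) := by unfold qq; fun_prop

lemma qq_pos {τ₁ τ₂ : ℝ} (h1 : 0 < τ₁) (h2 : 0 < τ₂) (θ : ℝ) : 0 < qq τ₁ τ₂ θ := by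
  have hs := Real.sin_sq_add_cos_sq θ
  have i1 : 0 < τ₁⁻¹ := by positivity
  have i2 : 0 < τ₂⁻¹ := by positivity
  unfold qq
  nlinarith [sq_nonneg (Real.cos θ), sq_nonneg (Real.sin θ), min_le_left τ₁⁻¹ τ₂⁻¹,
    min_le_right τ₁⁻¹ τ₂⁻¹, lt_min i1 i2]

lemma qq_le {τ₁ τ₂ : ℝ} (h1 : 0 < τ₁) (h2 : 0 < τ₂) (θ : ℝ) : qq τ₁ τ₂ θ ≤ τ₁⁻¹ + τ₂⁻¹ := by
  have hc := Real.cos_sq_le_one θ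
  have hsn := Real.sin_sq_le_one θ
  have i1 : 0 < τ₁⁻¹ := by positivity
  have i2 : 0 < τ₂⁻¹ := by positivity
  unfold qq
  nlinarith [sq_nonneg (Real.cos θ), sq_nonneg (Real.sin θ)]

lemma qq_neg (τ₁ τ₂ θ : ℝ) : qq τ₁ τ₂ (-θ) = qq τ₁ τ₂ θ := by unfold qq; simp

lemma qq_pi_sub (τ₁ τ₂ θ : ℝ) : qq τ₁ τ₂ (Real.pi - θ) = qq τ₁ τ₂ θ := by
  unfold qq; rw [Real.cos_pi_sub, Real.sin_pi_sub]; ring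

lemma rr_pos {τ₁ τ₂ R : ℝ} (h1 : 0 < τ₁) (h2 : 0 < τ₂) (hR : 0 < R) (θ : ℝ) :
    0 < rr τ₁ τ₂ R θ := by
  have h := qq_pos h1 h2 θ
  unfold rr; positivity

lemma rr_sq {τ₁ τ₂ R : ℝ} (h1 : 0 < τ₁) (h2 : 0 < τ₂) (hR : 0 < R) (θ : ℝ) :
    rr τ₁ τ₂ R θ ^ 2 = R ^ 2 / (2 * qq τ₁ τ₂ θ) := by
  have hq := qq_pos h1 h2 θ
  unfold rr
  rw [div_pow, div_pow, Real.sq_sqrt hq.le, Real.sq_sqrt (by norm_num : (0:ℝ) ≤ 2)]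
  ring

lemma rr_cont {τ₁ τ₂ R : ℝ} (h1 : 0 < τ₁) (h2 : 0 < τ₂) : Continuous (rr τ₁ τ₂ R) := by
  unfold rr
  exact continuous_const.div (Real.continuous_sqrt.comp (qq_cont τ₁ τ₂))
    (fun θ => (Real.sqrt_pos.2 (qq_pos h1 h2 θ)).ne')

lemma radial_integral {ε ρ : ℝ} (hε : 0 < ε) (hρ : 0 < ρ) :
    ∫ r in Ioo (0:ℝ) ρ, r / (ε + r ^ 2) = (Real.log (ε + ρ ^ 2) - Real.log ε) / 2 := by
  have hcont : Continuous (fun r : ℝ => r / (ε + r ^ 2)) := by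
    apply Continuous.div continuous_id (by fun_prop)
    intro r; positivity
  have hderiv : ∀ r ∈ Set.uIcc (0:ℝ) ρ,
      HasDerivAt (fun r => Real.log (ε + r ^ 2) / 2) (r / (ε + r ^ 2)) r := by
    intro r _
    have h1 : HasDerivAt (fun r : ℝ => ε + r ^ 2) (2 * r) r := by
      simpa using ((hasDerivAt_pow 2 r).const_add ε)
    have h2 := (h1.log (by positivity)).div_const 2
    rw [show r / (ε + r ^ 2) = 2 * r / (ε + r ^ 2) / 2 by ring]
    exact h2
  have := intervalIntegral.integral_eq_sub_of_hasDerivAt hderiv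
    (hcont.intervalIntegrable _ _)
  rw [← MeasureTheory.integral_Ioc_eq_integral_Ioo,
    ← intervalIntegral.integral_of_le hρ.le, this]
  simp; ring

lemma symm_lemma (g : ℝ → ℝ) (hg : Continuous g)
    (he : ∀ θ, g (-θ) = g θ) (hs : ∀ θ, g (Real.pi - θ) = g θ) :
    ∫ θ in Ioo (-Real.pi) Real.pi, g θ = 4 * ∫ θ in (0:ℝ)..(Real.pi/2), g θ := by
  have hpi := Real.pi_pos
  have hint : ∀ a b : ℝ, IntervalIntegrable g volume a b := fun a b => hg.intervalIntegrable a b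
  have h1 : ∫ θ in Ioo (-Real.pi) Real.pi, g θ = ∫ θ in (-Real.pi)..Real.pi, g θ := by
    rw [intervalIntegral.integral_of_le (by linarith), MeasureTheory.integral_Ioc_eq_integral_Ioo]
  have h2 : ∫ θ in (-Real.pi)..(0:ℝ), g θ = ∫ θ in (0:ℝ)..Real.pi, g θ := by
    have := intervalIntegral.integral_comp_neg (a := (0:ℝ)) (b := Real.pi) g
    rw [neg_zero] at this
    rw [← this]
    exact intervalIntegral.integral_congr (fun x _ => he x)
  have h3 : ∫ θ in (Real.pi/2)..Real.pi, g θ = ∫ θ in (0:ℝ)..(Real.pi/2), g θ := by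
    have := intervalIntegral.integral_comp_sub_left (a := (0:ℝ)) (b := Real.pi/2) g Real.pi
    rw [sub_zero, (by ring : Real.pi - Real.pi/2 = Real.pi/2)] at this
    rw [← this]
    exact intervalIntegral.integral_congr (fun x _ => hs x)
  have h4 : ∫ θ in (-Real.pi)..Real.pi, g θ
      = (∫ θ in (-Real.pi)..(0:ℝ), g θ) + ∫ θ in (0:ℝ)..Real.pi, g θ :=
    (intervalIntegral.integral_add_adjacent_intervals (hint _ _) (hint _ _)).symm
  have h5 : ∫ θ in (0:ℝ)..Real.pi, g θ
      = (∫ θ in (0:ℝ)..(Real.pi/2), g θ) + ∫ θ in (Real.pi/2)..Real.pi, g θ :=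
    (intervalIntegral.integral_add_adjacent_intervals (hint _ _) (hint _ _)).symm
  rw [h1, h4, h2, h5, h3]; ring

lemma stepA {R ε τ₁ τ₂ : ℝ} (hR : 0 < R) :
    (∫ x in Metric.ball (0 : EuclideanSpace ℝ (Fin 2)) R,
        1 / (ε + τ₁ * (x 0) ^ 2 / 2 + τ₂ * (x 1) ^ 2 / 2))
    = ∫ p in {p : ℝ × ℝ | p.1 ^ 2 + p.2 ^ 2 < R ^ 2},
        1 / (ε + τ₁ * p.1 ^ 2 / 2 + τ₂ * p.2 ^ 2 / 2) := by
  have hmp : MeasurePreserving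
      ((MeasurableEquiv.finTwoArrow (α := ℝ)).symm.trans
        (MeasurableEquiv.toLp 2 (Fin 2 → ℝ))) volume volume :=
    ((EuclideanSpace.volume_preserving_symm_measurableEquiv_toLp (Fin 2)).symm).comp
      ((volume_preserving_finTwoArrow ℝ).symm)
  set ψ := (MeasurableEquiv.finTwoArrow (α := ℝ)).symm.trans
      (MeasurableEquiv.toLp 2 (Fin 2 → ℝ)) with hψ
  have happ : ∀ p : ℝ × ℝ, ∀ i : Fin 2, (ψ p) i = ![p.1, p.2] i := by
    intro p i
    simp [ψ, MeasurableEquiv.trans_apply, MeasurableEquiv.finTwoArrow,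
      MeasurableEquiv.piFinTwo, MeasurableEquiv.coe_toLp]
  have hpre : ψ ⁻¹' (Metric.ball (0 : EuclideanSpace ℝ (Fin 2)) R)
      = {p : ℝ × ℝ | p.1 ^ 2 + p.2 ^ 2 < R ^ 2} := by
    ext p
    simp only [Set.mem_preimage, Metric.mem_ball, dist_zero_right, Set.mem_setOf_eq]
    rw [EuclideanSpace.norm_eq]
    have h0 := happ p 0
    have h1 := happ p 1
    rw [Fin.sum_univ_two, h0, h1]
    simp only [Matrix.cons_val_zero, Matrix.cons_val_one, Matrix.head_cons, Real.norm_eq_abs,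
      sq_abs]
    rw [Real.sqrt_lt' hR]
  rw [← hpre]
  rw [(hmp.setIntegral_preimage_emb ψ.measurableEmbedding
      (fun x : EuclideanSpace ℝ (Fin 2) => 1 / (ε + τ₁ * (x 0) ^ 2 / 2 + τ₂ * (x 1) ^ 2 / 2))
      (Metric.ball 0 R)).symm]
  refine integral_congr_ae (Filter.Eventually.of_forall fun p => ?_)
  have h0 := happ p 0
  have h1 := happ p 1
  simp only [Matrix.cons_val_zero, Matrix.cons_val_one, Matrix.head_cons] at h0 h1
  simp only []
  rw [h0, h1]

lemma stepB (c₁ c₂ : ℝ) (h1 : 0 < c₁) (h2 : 0 < c₂) (H : ℝ × ℝ → ℝ) (hH : Measurable H) :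
    ∫ p, H p = (c₁ * c₂) * ∫ p : ℝ × ℝ, H (c₁ * p.1, c₂ * p.2) := by
  set L : (ℝ × ℝ) →ₗ[ℝ] (ℝ × ℝ) :=
    Matrix.toLin (Module.Basis.finTwoProd ℝ) (Module.Basis.finTwoProd ℝ) !![c₁, 0; 0, c₂] with hL
  have hdet : LinearMap.det L = c₁ * c₂ := by
    rw [hL, LinearMap.det_toLin, Matrix.det_fin_two_of]; ring
  have happ : ∀ p : ℝ × ℝ, L p = (c₁ * p.1, c₂ * p.2) := by
    intro p
    simp [hL, Matrix.toLin_apply, Module.Basis.finTwoProd, Matrix.mulVec, Matrix.vecHead, Matrix.vecTail]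
  have hmap : Measure.map L volume = ENNReal.ofReal ((c₁ * c₂)⁻¹) • volume := by
    rw [Measure.map_linearMap_addHaar_eq_smul_addHaar volume (by rw [hdet]; positivity)]
    rw [hdet, abs_of_pos (by positivity)]
  have hLmeas : Measurable L := L.continuous_of_finiteDimensional.measurable
  have key : ∫ p, H (L p) = (c₁ * c₂)⁻¹ * ∫ p, H p := by
    rw [← integral_map hLmeas.aemeasurable (hH.aestronglyMeasurable), hmap,
      integral_smul_measure, ENNReal.toReal_ofReal (by positivity), smul_eq_mul]
  have hC : ∫ p : ℝ × ℝ, H (c₁ * p.1, c₂ * p.2) = ∫ p, H (L p) := by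
    refine integral_congr_ae (Filter.Eventually.of_forall fun p => ?_)
    simp only []
    rw [happ p]
  rw [hC, key]
  field_simp

set_option maxHeartbeats 1000000 in
lemma stepCD {τ₁ τ₂ R ε : ℝ} (h1 : 0 < τ₁) (h2 : 0 < τ₂) (hR : 0 < R) (hε : 0 < ε) :
    ∫ p : ℝ × ℝ, Set.indicator {z : ℝ × ℝ | 2 * τ₁⁻¹ * z.1 ^ 2 + 2 * τ₂⁻¹ * z.2 ^ 2 < R ^ 2}
        (fun z => 1 / (ε + z.1 ^ 2 + z.2 ^ 2)) p
    = ∫ θ in Ioo (-Real.pi) Real.pi,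
        (Real.log (ε + rr τ₁ τ₂ R θ ^ 2) - Real.log ε) / 2 := by
  have hpi := Real.pi_pos
  set E : Set (ℝ × ℝ) := {z : ℝ × ℝ | 2 * τ₁⁻¹ * z.1 ^ 2 + 2 * τ₂⁻¹ * z.2 ^ 2 < R ^ 2} with hE
  set G : ℝ × ℝ → ℝ := E.indicator (fun z => 1 / (ε + z.1 ^ 2 + z.2 ^ 2)) with hG
  set E' : Set (ℝ × ℝ) := {z : ℝ × ℝ | 2 * z.1 ^ 2 * qq τ₁ τ₂ z.2 < R ^ 2} with hE'
  set W : ℝ × ℝ → ℝ := fun p => p.1 * E'.indicator (fun z => 1 / (ε + z.1 ^ 2)) p with hW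
  have hE'open : IsOpen E' := by
    apply isOpen_lt _ continuous_const
    exact (continuous_const.mul (continuous_fst.pow 2)).mul ((qq_cont τ₁ τ₂).comp continuous_snd)
  have hWmeas : Measurable W := by
    apply measurable_fst.mul
    exact Measurable.indicator (by fun_prop (disch := positivity)) hE'open.measurableSet
  -- Step C : polar coordinates
  have key : ∀ p : ℝ × ℝ, p.1 • G (polarCoord.symm p) = W p := by
    intro p
    have hc : ε + (p.1 * Real.cos p.2) ^ 2 + (p.1 * Real.sin p.2) ^ 2 = ε + p.1 ^ 2 := by
      have h := Real.sin_sq_add_cos_sq p.2; nlinarith [h]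
    have hcond : 2 * τ₁⁻¹ * (p.1 * Real.cos p.2) ^ 2 + 2 * τ₂⁻¹ * (p.1 * Real.sin p.2) ^ 2
        = 2 * p.1 ^ 2 * qq τ₁ τ₂ p.2 := by unfold qq; ring
    simp only [hG, hW, Set.indicator_apply, polarCoord_symm_apply, Set.mem_setOf_eq, hE, hE']
    rw [hcond]
    split_ifs with h
    · rw [smul_eq_mul, hc]
    · simp
  have hpolar : ∫ p : ℝ × ℝ, G p = ∫ p in polarCoord.target, W p := by
    rw [← integral_comp_polarCoord_symm G]
    exact setIntegral_congr_fun polarCoord.open_target.measurableSet (fun p _ => key p)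
  -- Step D : Fubini
  have hm : 0 < min τ₁⁻¹ τ₂⁻¹ := lt_min (by positivity) (by positivity)
  have hqge : ∀ θ, min τ₁⁻¹ τ₂⁻¹ ≤ qq τ₁ τ₂ θ := by
    intro θ
    have hs := Real.sin_sq_add_cos_sq θ
    unfold qq
    nlinarith [mul_le_mul_of_nonneg_right (min_le_left τ₁⁻¹ τ₂⁻¹) (sq_nonneg (Real.cos θ)),
      mul_le_mul_of_nonneg_right (min_le_right τ₁⁻¹ τ₂⁻¹) (sq_nonneg (Real.sin θ))]
  set ρmax : ℝ := R / Real.sqrt (2 * min τ₁⁻¹ τ₂⁻¹) with hρmax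
  have hsq2 : 0 < Real.sqrt (2 * min τ₁⁻¹ τ₂⁻¹) := Real.sqrt_pos.2 (by positivity)
  have hρmaxpos : 0 < ρmax := by positivity
  have hρmaxsq : ρmax ^ 2 = R ^ 2 / (2 * min τ₁⁻¹ τ₂⁻¹) := by
    rw [hρmax, div_pow, Real.sq_sqrt (by positivity)]
  set T : Set (ℝ × ℝ) := Ioi (0:ℝ) ×ˢ Ioo (-Real.pi) Real.pi with hT
  have hTmeas : MeasurableSet T := measurableSet_Ioi.prod measurableSet_Ioo
  have htarget : polarCoord.target = T := rfl
  set W' : ℝ × ℝ → ℝ := T.indicator W with hW'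
  have hW'meas : Measurable W' := hWmeas.indicator hTmeas
  set B : ℝ × ℝ → ℝ :=
    (Ioo (0:ℝ) ρmax ×ˢ Ioo (-Real.pi) Real.pi).indicator (fun _ => ρmax * ε⁻¹) with hB
  have hBint : Integrable B := by
    rw [hB, integrable_indicator_iff (measurableSet_Ioo.prod measurableSet_Ioo)]
    refine integrableOn_const (ne_of_lt ?_)
    rw [Measure.volume_eq_prod, Measure.prod_prod]
    exact ENNReal.mul_lt_top measure_Ioo_lt_top measure_Ioo_lt_top
  have hBnonneg : ∀ p, 0 ≤ B p := fun p => Set.indicator_nonneg (fun _ _ => by positivity) p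
  have hbound : ∀ p, ‖W' p‖ ≤ B p := by
    intro p
    by_cases hpT : p ∈ T
    · rw [hW', Set.indicator_of_mem hpT, hW]
      simp only []
      by_cases hpE : p ∈ E'
      · have hp1 : 0 < p.1 := hpT.1
        have hcond : 2 * p.1 ^ 2 * qq τ₁ τ₂ p.2 < R ^ 2 := hpE
        have hq := hqge p.2
        have hlt : p.1 < ρmax := by
          have h2' : p.1 ^ 2 < ρmax ^ 2 := by
            rw [hρmaxsq, lt_div_iff₀ (by positivity)]
            nlinarith [mul_le_mul_of_nonneg_left hq (by positivity : (0:ℝ) ≤ 2 * p.1 ^ 2)]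
          nlinarith [hp1, hρmaxpos]
        have hmemB : p ∈ Ioo (0:ℝ) ρmax ×ˢ Ioo (-Real.pi) Real.pi := ⟨⟨hp1, hlt⟩, hpT.2⟩
        rw [hB, Set.indicator_of_mem hmemB, Set.indicator_of_mem hpE]
        have hval : (0:ℝ) < ε + p.1 ^ 2 := by positivity
        rw [Real.norm_eq_abs, abs_of_nonneg (by positivity)]
        have hfr : 1 / (ε + p.1 ^ 2) ≤ ε⁻¹ := by
          rw [one_div]
          exact inv_anti₀ hε (by nlinarith)
        exact mul_le_mul hlt.le hfr (by positivity) hρmaxpos.le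
      · rw [Set.indicator_of_notMem hpE, mul_zero, norm_zero]
        exact hBnonneg p
    · rw [hW', Set.indicator_of_notMem hpT, norm_zero]
      exact hBnonneg p
  have hW'int : Integrable W' := hBint.mono' hW'meas.aestronglyMeasurable (ae_of_all _ hbound)
  have hfub : ∫ p : ℝ × ℝ, W' p = ∫ θ : ℝ, (∫ r : ℝ, W' (r, θ)) := by
    rw [Measure.volume_eq_prod] at hW'int ⊢
    exact integral_prod_symm W' hW'int
  have hinner : ∀ θ : ℝ, (∫ r : ℝ, W' (r, θ))
      = (Ioo (-Real.pi) Real.pi).indicator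
          (fun θ => (Real.log (ε + rr τ₁ τ₂ R θ ^ 2) - Real.log ε) / 2) θ := by
    intro θ
    by_cases hθ : θ ∈ Ioo (-Real.pi) Real.pi
    · have hrrp := rr_pos h1 h2 hR θ
      have hq := qq_pos h1 h2 θ
      have hptw : ∀ r : ℝ, W' (r, θ)
          = (Ioo (0:ℝ) (rr τ₁ τ₂ R θ)).indicator (fun r => r / (ε + r ^ 2)) r := by
        intro r
        by_cases hr : 0 < r
        · have hmemT : (r, θ) ∈ T := ⟨hr, hθ⟩
          rw [hW', Set.indicator_of_mem hmemT, hW]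
          simp only []
          by_cases hE'm : (r, θ) ∈ E'
          · have hcond : 2 * r ^ 2 * qq τ₁ τ₂ θ < R ^ 2 := hE'm
            have hrlt : r < rr τ₁ τ₂ R θ := by
              have hsq := rr_sq h1 h2 hR θ
              have h2' : r ^ 2 < rr τ₁ τ₂ R θ ^ 2 := by
                rw [hsq, lt_div_iff₀ (by positivity)]
                nlinarith
              nlinarith
            rw [Set.indicator_of_mem hE'm]
            rw [Set.indicator_of_mem (show r ∈ Ioo (0:ℝ) (rr τ₁ τ₂ R θ) from ⟨hr, hrlt⟩)]
            show r * (1 / (ε + r ^ 2)) = r / (ε + r ^ 2)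
            rw [mul_one_div]
          · have hnm : r ∉ Ioo (0:ℝ) (rr τ₁ τ₂ R θ) := by
              intro hmem
              apply hE'm
              have hsq := rr_sq h1 h2 hR θ
              have : r ^ 2 < rr τ₁ τ₂ R θ ^ 2 := by nlinarith [hmem.1, hmem.2]
              show 2 * r ^ 2 * qq τ₁ τ₂ θ < R ^ 2
              rw [hsq, lt_div_iff₀ (by positivity)] at this
              nlinarith
            rw [Set.indicator_of_notMem hE'm, Set.indicator_of_notMem hnm, mul_zero]
        · have hnT : (r, θ) ∉ T := fun h => hr h.1
          have hnm : r ∉ Ioo (0:ℝ) (rr τ₁ τ₂ R θ) := fun h => hr h.1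
          rw [hW', Set.indicator_of_notMem hnT, Set.indicator_of_notMem hnm]
      rw [integral_congr_ae (ae_of_all _ hptw), MeasureTheory.integral_indicator measurableSet_Ioo,
        radial_integral hε hrrp, Set.indicator_of_mem hθ]
    · have hz : ∀ r : ℝ, W' (r, θ) = 0 := by
        intro r
        exact Set.indicator_of_notMem (fun h => hθ h.2) _
      rw [Set.indicator_of_notMem hθ]
      simp only [hz, integral_zero]
  calc ∫ p : ℝ × ℝ, G p = ∫ p in polarCoord.target, W p := hpolar
    _ = ∫ p : ℝ × ℝ, W' p := by rw [htarget, hW', integral_indicator hTmeas]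
    _ = ∫ θ : ℝ, (∫ r : ℝ, W' (r, θ)) := hfub
    _ = ∫ θ : ℝ, (Ioo (-Real.pi) Real.pi).indicator
          (fun θ => (Real.log (ε + rr τ₁ τ₂ R θ ^ 2) - Real.log ε) / 2) θ :=
        integral_congr_ae (ae_of_all _ hinner)
    _ = ∫ θ in Ioo (-Real.pi) Real.pi,
          (Real.log (ε + rr τ₁ τ₂ R θ ^ 2) - Real.log ε) / 2 :=
        integral_indicator measurableSet_Ioo


lemma main_eq {τ₁ τ₂ R ε : ℝ} (h1 : 0 < τ₁) (h2 : 0 < τ₂) (hR : 0 < R) (hε : 0 < ε) :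
    (∫ x in Metric.ball (0 : EuclideanSpace ℝ (Fin 2)) R,
        1 / (ε + τ₁ * (x 0) ^ 2 / 2 + τ₂ * (x 1) ^ 2 / 2))
    = (Real.sqrt (2 * τ₁⁻¹) * Real.sqrt (2 * τ₂⁻¹)) *
        ∫ θ in Ioo (-Real.pi) Real.pi,
          (Real.log (ε + rr τ₁ τ₂ R θ ^ 2) - Real.log ε) / 2 := by
  set c₁ : ℝ := Real.sqrt (2 * τ₁⁻¹) with hc₁
  set c₂ : ℝ := Real.sqrt (2 * τ₂⁻¹) with hc₂
  have hc1pos : 0 < c₁ := Real.sqrt_pos.2 (by positivity)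
  have hc2pos : 0 < c₂ := Real.sqrt_pos.2 (by positivity)
  have hc1sq : c₁ ^ 2 = 2 * τ₁⁻¹ := Real.sq_sqrt (by positivity)
  have hc2sq : c₂ ^ 2 = 2 * τ₂⁻¹ := Real.sq_sqrt (by positivity)
  rw [stepA hR]
  have hSopen : IsOpen {p : ℝ × ℝ | p.1 ^ 2 + p.2 ^ 2 < R ^ 2} :=
    isOpen_lt (by fun_prop) continuous_const
  set f : ℝ × ℝ → ℝ := fun p => 1 / (ε + τ₁ * p.1 ^ 2 / 2 + τ₂ * p.2 ^ 2 / 2) with hf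
  have hfcont : Continuous f := by
    apply continuous_const.div (by fun_prop)
    intro p
    have : 0 < ε + τ₁ * p.1 ^ 2 / 2 + τ₂ * p.2 ^ 2 / 2 := by positivity
    exact this.ne'
  set H : ℝ × ℝ → ℝ := Set.indicator {p : ℝ × ℝ | p.1 ^ 2 + p.2 ^ 2 < R ^ 2} f with hH
  have hHmeas : Measurable H := hfcont.measurable.indicator hSopen.measurableSet
  rw [← integral_indicator hSopen.measurableSet]
  rw [show (Set.indicator {p : ℝ × ℝ | p.1 ^ 2 + p.2 ^ 2 < R ^ 2} fun p : ℝ × ℝ =>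
      1 / (ε + τ₁ * p.1 ^ 2 / 2 + τ₂ * p.2 ^ 2 / 2)) = H from rfl]
  rw [stepB c₁ c₂ hc1pos hc2pos H hHmeas]
  congr 1
  have hpt : ∀ p : ℝ × ℝ, H (c₁ * p.1, c₂ * p.2)
      = Set.indicator {z : ℝ × ℝ | 2 * τ₁⁻¹ * z.1 ^ 2 + 2 * τ₂⁻¹ * z.2 ^ 2 < R ^ 2}
          (fun z => 1 / (ε + z.1 ^ 2 + z.2 ^ 2)) p := by
    intro p
    simp only [hH, hf, Set.indicator_apply, Set.mem_setOf_eq]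
    have e1 : (c₁ * p.1) ^ 2 + (c₂ * p.2) ^ 2 = 2 * τ₁⁻¹ * p.1 ^ 2 + 2 * τ₂⁻¹ * p.2 ^ 2 := by
      rw [mul_pow, mul_pow, hc1sq, hc2sq]
    rw [e1]
    split_ifs with h
    · have e2 : ε + τ₁ * (c₁ * p.1) ^ 2 / 2 + τ₂ * (c₂ * p.2) ^ 2 / 2
          = ε + p.1 ^ 2 + p.2 ^ 2 := by
        rw [mul_pow, mul_pow, hc1sq, hc2sq]
        field_simp
      rw [e2]
    · rfl
  rw [integral_congr_ae (Filter.Eventually.of_forall hpt)]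
  exact stepCD h1 h2 hR hε

lemma qq_def (τ₁ τ₂ θ : ℝ) : qq τ₁ τ₂ θ = τ₁⁻¹ * Real.cos θ ^ 2 + τ₂⁻¹ * Real.sin θ ^ 2 := rfl
lemma rr_def (τ₁ τ₂ R θ : ℝ) : rr τ₁ τ₂ R θ = (R / Real.sqrt 2) / Real.sqrt (qq τ₁ τ₂ θ) := rfl

/-- Small-ε asymptotics of the thin-gap integral in dimension `d = 3`:
`∫_{B'_R} dx'/(ε + τ₁x₁²/2 + τ₂x₂²/2) = (2π/√(τ₁τ₂)) log(1/ε) + K + O(ε)`,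
with `K = (8/√(τ₁τ₂)) ∫₀^{π/2} log R(θ) dθ`,
`R(θ) = (R/√2)(τ₁⁻¹cos²θ + τ₂⁻¹sin²θ)^{−1/2}`. -/
theorem stmt9 (τ₁ τ₂ R : ℝ) (hτ₁ : 0 < τ₁) (hτ₂ : 0 < τ₂) (hR : 0 < R)
    (K : ℝ)
    (hK : K = (8 / Real.sqrt (τ₁ * τ₂)) *
      ∫ θ in (0 : ℝ)..(Real.pi / 2),
        Real.log ((R / Real.sqrt 2) /
          Real.sqrt (τ₁⁻¹ * Real.cos θ ^ 2 + τ₂⁻¹ * Real.sin θ ^ 2))) :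
    ∃ C : ℝ, 0 < C ∧ ∀ ε : ℝ, 0 < ε → ε ≤ 1 →
      |(∫ x in Metric.ball (0 : EuclideanSpace ℝ (Fin 2)) R,
          1 / (ε + τ₁ * (x 0) ^ 2 / 2 + τ₂ * (x 1) ^ 2 / 2)) -
        (2 * Real.pi / Real.sqrt (τ₁ * τ₂)) * Real.log (1 / ε) - K| ≤ C * ε := by
  have hpi := Real.pi_pos
  have hst : (0:ℝ) < Real.sqrt (τ₁ * τ₂) := Real.sqrt_pos.2 (by positivity)
  set s : ℝ := Real.sqrt (τ₁ * τ₂) with hs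
  set M : ℝ := τ₁⁻¹ + τ₂⁻¹ with hM
  have hMpos : 0 < M := by positivity
  refine ⟨(2 * Real.pi / s) * (2 * M / R ^ 2), by positivity, ?_⟩
  intro ε hε hε1
  -- continuity facts
  have hrrc : Continuous (rr τ₁ τ₂ R) := rr_cont hτ₁ hτ₂
  have hrrpos : ∀ θ, 0 < rr τ₁ τ₂ R θ := rr_pos hτ₁ hτ₂ hR
  have hlogrrc : Continuous (fun θ => Real.log (rr τ₁ τ₂ R θ)) :=
    hrrc.log (fun θ => (hrrpos θ).ne')
  have hg1c : Continuous (fun θ => Real.log (ε + rr τ₁ τ₂ R θ ^ 2)) := by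
    apply Continuous.log (by fun_prop)
    intro θ
    have := hrrpos θ
    positivity
  have hg2c : Continuous (fun θ => Real.log (rr τ₁ τ₂ R θ ^ 2)) := by
    apply Continuous.log (by fun_prop)
    intro θ
    have := hrrpos θ
    positivity
  have hvol : (volume (Ioo (-Real.pi) Real.pi)).toReal = 2 * Real.pi := by
    rw [Real.volume_Ioo, ENNReal.toReal_ofReal (by linarith)]
    ring
  have hvollt : volume (Ioo (-Real.pi) Real.pi) < ⊤ := measure_Ioo_lt_top
  have hint1 : IntegrableOn (fun θ => Real.log (ε + rr τ₁ τ₂ R θ ^ 2))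
      (Ioo (-Real.pi) Real.pi) := (hg1c.integrableOn_Icc).mono_set Ioo_subset_Icc_self
  have hint2 : IntegrableOn (fun θ => Real.log (rr τ₁ τ₂ R θ ^ 2))
      (Ioo (-Real.pi) Real.pi) := (hg2c.integrableOn_Icc).mono_set Ioo_subset_Icc_self
  -- the symmetric integral
  set J : ℝ := ∫ θ in (0:ℝ)..(Real.pi/2), Real.log (rr τ₁ τ₂ R θ) with hJ
  have hKJ : K = (8 / s) * J := by
    rw [hK, hJ]
    rfl
  have hsym : ∫ θ in Ioo (-Real.pi) Real.pi, Real.log (rr τ₁ τ₂ R θ) = 4 * J := by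
    rw [hJ]
    apply symm_lemma _ hlogrrc
    · intro θ; rw [rr_def, rr_def, qq_neg]
    · intro θ; rw [rr_def, rr_def, qq_pi_sub]
  have hg2val : ∫ θ in Ioo (-Real.pi) Real.pi, Real.log (rr τ₁ τ₂ R θ ^ 2) = 8 * J := by
    have e : ∀ θ : ℝ, Real.log (rr τ₁ τ₂ R θ ^ 2) = 2 * Real.log (rr τ₁ τ₂ R θ) := by
      intro θ
      rw [Real.log_pow]
      norm_num
    rw [integral_congr_ae (ae_of_all _ fun θ => e θ), MeasureTheory.integral_const_mul, hsym]
    ring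
  -- split the integral
  set D : ℝ := ∫ θ in Ioo (-Real.pi) Real.pi,
      (Real.log (ε + rr τ₁ τ₂ R θ ^ 2) - Real.log (rr τ₁ τ₂ R θ ^ 2)) with hD
  have hsplit : ∫ θ in Ioo (-Real.pi) Real.pi,
      (Real.log (ε + rr τ₁ τ₂ R θ ^ 2) - Real.log ε) / 2
      = (D + 8 * J - 2 * Real.pi * Real.log ε) / 2 := by
    rw [integral_div]
    congr 1
    have e1 : ∫ θ in Ioo (-Real.pi) Real.pi, (Real.log (ε + rr τ₁ τ₂ R θ ^ 2) - Real.log ε)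
        = (∫ θ in Ioo (-Real.pi) Real.pi, Real.log (ε + rr τ₁ τ₂ R θ ^ 2))
          - (volume (Ioo (-Real.pi) Real.pi)).toReal * Real.log ε := by
      rw [integral_sub hint1 (integrableOn_const hvollt.ne)]
      rw [setIntegral_const, smul_eq_mul]
      rfl
    have e3 : ∫ θ in Ioo (-Real.pi) Real.pi, Real.log (ε + rr τ₁ τ₂ R θ ^ 2)
        = D + 8 * J := by
      have hsub := integral_sub hint1 hint2
      rw [hD, hsub, hg2val]
      ring
    rw [e1, e3, hvol]
  -- pointwise bound on D's integrand
  have hptbd : ∀ θ ∈ Ioo (-Real.pi) Real.pi,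
      ‖Real.log (ε + rr τ₁ τ₂ R θ ^ 2) - Real.log (rr τ₁ τ₂ R θ ^ 2)‖ ≤ ε * (2 * M / R ^ 2) := by
    intro θ _
    set x : ℝ := rr τ₁ τ₂ R θ with hx
    have hxpos : 0 < x := hrrpos θ
    have hx2 : (0:ℝ) < x ^ 2 := by positivity
    have hqθ := qq_pos hτ₁ hτ₂ θ
    have hrat : Real.log (ε + x ^ 2) - Real.log (x ^ 2) = Real.log ((ε + x ^ 2) / x ^ 2) := by
      rw [Real.log_div (by positivity) hx2.ne']
    have hge1 : (1:ℝ) ≤ (ε + x ^ 2) / x ^ 2 := by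
      rw [le_div_iff₀ hx2]
      linarith
    have hnn : 0 ≤ Real.log ((ε + x ^ 2) / x ^ 2) := Real.log_nonneg hge1
    have hub : Real.log ((ε + x ^ 2) / x ^ 2) ≤ ε / x ^ 2 := by
      have := Real.log_le_sub_one_of_pos (by positivity : (0:ℝ) < (ε + x ^ 2) / x ^ 2)
      have e : (ε + x ^ 2) / x ^ 2 - 1 = ε / x ^ 2 := by field_simp; ring
      linarith [e ▸ this]
    have hxsq := rr_sq hτ₁ hτ₂ hR θ
    have hfin : ε / x ^ 2 ≤ ε * (2 * M / R ^ 2) := by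
      rw [show x ^ 2 = R ^ 2 / (2 * qq τ₁ τ₂ θ) from hxsq]
      rw [div_div_eq_mul_div, div_le_iff₀ (by positivity)]
      have hqM := qq_le hτ₁ hτ₂ θ
      have : ε * (2 * qq τ₁ τ₂ θ) ≤ ε * (2 * M) :=
        mul_le_mul_of_nonneg_left (by rw [hM]; linarith) hε.le
      calc ε * (2 * qq τ₁ τ₂ θ) ≤ ε * (2 * M) := this
        _ = ε * (2 * M / R ^ 2) * R ^ 2 := by field_simp
    rw [hrat, Real.norm_eq_abs, abs_of_nonneg hnn]
    linarith
  have hDbd : |D| ≤ ε * (2 * M / R ^ 2) * (2 * Real.pi) := by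
    rw [hD, ← Real.norm_eq_abs, ← hvol]
    exact norm_setIntegral_le_of_norm_le_const hvollt hptbd
  -- the product of square roots
  have hcc : Real.sqrt (2 * τ₁⁻¹) * Real.sqrt (2 * τ₂⁻¹) = 2 / s := by
    rw [← Real.sqrt_mul (by positivity), hs]
    rw [show 2 * τ₁⁻¹ * (2 * τ₂⁻¹) = 2 ^ 2 * (τ₁ * τ₂)⁻¹ by field_simp]
    rw [Real.sqrt_mul (by norm_num), Real.sqrt_sq (by norm_num), Real.sqrt_inv]
    rw [division_def]
  -- final computation
  rw [main_eq hτ₁ hτ₂ hR hε, hsplit, hcc, hKJ]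
  have hεlog : Real.log (1 / ε) = -Real.log ε := by rw [one_div, Real.log_inv]
  rw [hεlog]
  have hfinal : 2 / s * ((D + 8 * J - 2 * Real.pi * Real.log ε) / 2)
      - 2 * Real.pi / s * -Real.log ε - 8 / s * J = D / s := by
    field_simp
    ring
  rw [hfinal]
  rw [abs_div, abs_of_pos hst]
  rw [div_le_iff₀ hst]
  have hsne : s ≠ 0 := hst.ne'
  have heq : 2 * Real.pi / s * (2 * M / R ^ 2) * ε * s = ε * (2 * M / R ^ 2) * (2 * Real.pi) := by
    field_simp
  rw [heq]
  exact hDbd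
end

section
/- Let d ≥ 2, let s ⊆ ℝ^{d−1} be a measurable set, and let h, H : ℝ^{d−1} → ℝ be measurable functions with h(x') ≤ H(x') for x' ∈ s and δ̄ := sup_{x' ∈ s}(H(x') − h(x')) < ∞. Let Ω = {(x', t) ∈ ℝ^{d−1} × ℝ : x' ∈ s, h(x') < t < H(x')} be the region between the graphs, and let w : ℝ^{d−1} × ℝ → ℝ be measurable such that for each x' ∈ s the function t ↦ w(x', t) is continuously differentiable on [h(x'), H(x')] with w(x', h(x')) = 0, and such that the vertical derivative ∂_t w is square-integrable on Ω. Then ∫_Ω w² ≤ δ̄² ∫_Ω (∂_t w)². -/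
open MeasureTheory Set intervalIntegral
open scoped ENNReal NNReal

lemma cs_slice {a t : ℝ} (hat : a ≤ t) {g : ℝ → ℝ}
    (hg : ContinuousOn g (Icc a t)) :
    (∫ u in Ioc a t, g u) ^ 2 ≤ (t - a) * ∫ u in Ioc a t, (g u) ^ 2 := by
  set μ := volume.restrict (Ioc a t) with hμ
  have hgi : IntegrableOn g (Ioc a t) :=
    (hg.integrableOn_Icc).mono_set Ioc_subset_Icc_self
  have hg2i : IntegrableOn (fun u => (g u)^2) (Ioc a t) :=
    ((hg.pow 2).integrableOn_Icc).mono_set Ioc_subset_Icc_self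
  have hconj : Real.HolderConjugate 2 2 := ⟨by norm_num, by norm_num, by norm_num⟩
  have hmf : MemLp (fun u => |g u|) (ENNReal.ofReal 2) μ := by
    rw [show ENNReal.ofReal 2 = 2 by norm_num]
    refine (memLp_two_iff_integrable_sq hgi.abs.aestronglyMeasurable).2 ?_
    simpa [sq_abs, IntegrableOn] using hg2i
  have hmg : MemLp (fun _ : ℝ => (1:ℝ)) (ENNReal.ofReal 2) μ := by
    rw [show ENNReal.ofReal 2 = 2 by norm_num]
    exact memLp_const 1
  have hCS := integral_mul_le_Lp_mul_Lq_of_nonneg hconj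
    (f := fun u => |g u|) (g := fun _ => (1:ℝ)) (μ := μ)
    (Filter.Eventually.of_forall fun u => abs_nonneg _)
    (Filter.Eventually.of_forall fun u => zero_le_one) hmf hmg
  have habs2 : ∀ x:ℝ, |x| ^ (2:ℝ) = x ^ 2 := fun x => by
    rw [show (2:ℝ) = ((2:ℕ):ℝ) by norm_num, Real.rpow_natCast, sq_abs]
  simp only [mul_one, Real.one_rpow, habs2] at hCS
  have hμuniv : ∫ _ : ℝ, (1:ℝ) ∂μ = t - a := by
    simp [hμ, Real.volume_Ioc, ENNReal.toReal_ofReal (sub_nonneg.2 hat), hat]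
  rw [hμuniv] at hCS
  have h1 : |∫ u in Ioc a t, g u| ≤ ∫ u in Ioc a t, |g u| := by
    simpa [Real.norm_eq_abs] using
      MeasureTheory.norm_integral_le_integral_norm (μ := μ) g
  have hI2 : 0 ≤ ∫ u in Ioc a t, (g u)^2 :=
    integral_nonneg fun u => sq_nonneg _
  calc (∫ u in Ioc a t, g u) ^ 2 = |∫ u in Ioc a t, g u| ^ 2 := (sq_abs _).symm
    _ ≤ (∫ u in Ioc a t, |g u|) ^ 2 := by
        apply pow_le_pow_left₀ (abs_nonneg _) h1
    _ ≤ ((∫ u in Ioc a t, (g u)^2) ^ (1/(2:ℝ)) * (t - a) ^ (1/(2:ℝ)))^2 := by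
        apply pow_le_pow_left₀ (integral_nonneg fun u => abs_nonneg _) hCS
    _ = (t - a) * ∫ u in Ioc a t, (g u)^2 := by
        rw [mul_pow, ← Real.rpow_natCast (_ ^ (1/(2:ℝ))) 2,
          ← Real.rpow_natCast ((t-a) ^ (1/(2:ℝ))) 2,
          ← Real.rpow_mul hI2, ← Real.rpow_mul (sub_nonneg.2 hat)]
        norm_num [mul_comm]

lemma slice_poincare {a b δ : ℝ} (hab : a ≤ b) (hbδ : b - a ≤ δ) (hδ0 : 0 ≤ δ)
    {f : ℝ → ℝ} (hf : ContDiffOn ℝ 1 f (Set.Icc a b)) (hfa : f a = 0) :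
    ∫ t in Ioo a b, (f t)^2 ≤ δ^2 * ∫ t in Ioo a b, (deriv f t)^2 := by
  rcases eq_or_lt_of_le hab with rfl | hab'
  · simp
  set g := derivWithin f (Icc a b) with hg
  have hgc : ContinuousOn g (Icc a b) :=
    hf.continuousOn_derivWithin (uniqueDiffOn_Icc hab') le_rfl
  have hfc : ContinuousOn f (Icc a b) := hf.continuousOn
  have hder : ∀ t ∈ Ioo a b, HasDerivAt f (g t) t := by
    intro t ht
    have hmem : Icc a b ∈ nhds t := Icc_mem_nhds ht.1 ht.2
    have hd : DifferentiableAt ℝ f t :=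
      ((hf.differentiableOn one_ne_zero) t (Ioo_subset_Icc_self ht)).differentiableAt hmem
    have : g t = deriv f t := derivWithin_of_mem_nhds hmem
    rw [this]; exact hd.hasDerivAt
  have hderiv_eq : ∀ t ∈ Ioo a b, deriv f t = g t := fun t ht =>
    (derivWithin_of_mem_nhds (Icc_mem_nhds ht.1 ht.2)).symm
  have hg2int : IntegrableOn (fun u => (g u)^2) (Ioo a b) :=
    ((hgc.pow 2).integrableOn_Icc).mono_set Ioo_subset_Icc_self
  set I := ∫ u in Ioo a b, (g u)^2 with hI
  have hI0 : 0 ≤ I := integral_nonneg fun u => sq_nonneg _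
  -- pointwise bound on Ioo
  have hpt : ∀ t ∈ Ioo a b, (f t)^2 ≤ δ * I := by
    intro t ht
    have hat : a ≤ t := le_of_lt ht.1
    have hIcc : Icc a t ⊆ Icc a b := Icc_subset_Icc le_rfl (le_of_lt ht.2)
    have hftc : f t = ∫ u in Ioc a t, g u := by
      have := integral_eq_sub_of_hasDerivAt_of_le hat (hfc.mono hIcc)
        (fun u hu => hder u ⟨hu.1, lt_of_lt_of_le hu.2 (le_of_lt ht.2)⟩)
        ((hgc.mono hIcc).intervalIntegrable_of_Icc hat)
      rw [hfa, sub_zero] at this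
      rw [← this, intervalIntegral.integral_of_le hat]
    have hcs := cs_slice hat (hgc.mono hIcc)
    rw [← hftc] at hcs
    have hmono : ∫ u in Ioc a t, (g u)^2 ≤ I := by
      apply setIntegral_mono_set hg2int
        (Filter.Eventually.of_forall fun u => sq_nonneg _)
      exact HasSubset.Subset.eventuallyLE fun u hu => ⟨hu.1, lt_of_le_of_lt hu.2 ht.2⟩
    calc (f t)^2 ≤ (t - a) * ∫ u in Ioc a t, (g u)^2 := hcs
      _ ≤ δ * I := by
          apply mul_le_mul _ hmono (integral_nonneg fun u => sq_nonneg _) hδ0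
          linarith [ht.2]
  -- integrate the pointwise bound
  have hf2int : IntegrableOn (fun t => (f t)^2) (Ioo a b) :=
    ((hfc.pow 2).integrableOn_Icc).mono_set Ioo_subset_Icc_self
  have hstep : ∫ t in Ioo a b, (f t)^2 ≤ ∫ _ in Ioo a b, δ * I := by
    apply setIntegral_mono_on hf2int (integrableOn_const ?_)
      measurableSet_Ioo hpt
    simp [Real.volume_Ioo]
  have hconst : ∫ _ in Ioo a b, δ * I = (b - a) * (δ * I) := by
    simp [Real.volume_Ioo, ENNReal.toReal_ofReal (sub_nonneg.2 hab), hab]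
  have hfinal : ∫ t in Ioo a b, (f t)^2 ≤ δ^2 * I := by
    refine hstep.trans ?_
    rw [hconst]
    nlinarith [mul_nonneg hδ0 hI0]
  have : ∫ t in Ioo a b, (deriv f t)^2 = I := by
    apply setIntegral_congr_fun measurableSet_Ioo
    intro t ht; simp only [hderiv_eq t ht]
  rw [this]; exact hfinal

lemma tonelli_aux {X : Type*} [MeasureSpace X] [SigmaFinite (volume : Measure X)]
    {s : Set X} (hs : MeasurableSet s) {h H : X → ℝ}
    (hmh : Measurable h) (hmH : Measurable H)
    (f : X × ℝ → ℝ≥0∞)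
    (hf : AEMeasurable f ((volume : Measure (X × ℝ)).restrict
      {p : X × ℝ | p.1 ∈ s ∧ h p.1 < p.2 ∧ p.2 < H p.1})) :
    ∫⁻ p in {p : X × ℝ | p.1 ∈ s ∧ h p.1 < p.2 ∧ p.2 < H p.1}, f p =
      ∫⁻ x in s, ∫⁻ t in Set.Ioo (h x) (H x), f (x, t) := by
  set Ω : Set (X × ℝ) := {p : X × ℝ | p.1 ∈ s ∧ h p.1 < p.2 ∧ p.2 < H p.1} with hΩ
  have hΩm : MeasurableSet Ω :=
    (hs.preimage measurable_fst).inter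
      ((measurableSet_lt (hmh.comp measurable_fst) measurable_snd).inter
        (measurableSet_lt measurable_snd (hmH.comp measurable_fst)))
  have hind : AEMeasurable (Ω.indicator f) (volume : Measure (X × ℝ)) :=
    (aemeasurable_indicator_iff hΩm).2 hf
  rw [← lintegral_indicator hΩm]
  rw [Measure.volume_eq_prod] at hind ⊢
  rw [lintegral_prod _ hind]
  have hslice : ∀ x, (∫⁻ t, Ω.indicator f (x, t)) =
      s.indicator (fun x => ∫⁻ t in Ioo (h x) (H x), f (x, t)) x := by
    intro x
    by_cases hxs : x ∈ s
    · rw [Set.indicator_of_mem hxs, ← lintegral_indicator measurableSet_Ioo]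
      congr 1; ext t
      by_cases ht : t ∈ Ioo (h x) (H x)
      · rw [Set.indicator_of_mem ht,
          Set.indicator_of_mem (show (x, t) ∈ Ω from ⟨hxs, ht.1, ht.2⟩)]
      · rw [Set.indicator_of_notMem ht, Set.indicator_of_notMem (fun hc => ht ⟨hc.2.1, hc.2.2⟩)]
    · rw [Set.indicator_of_notMem hxs]
      have : ∀ t : ℝ, Ω.indicator f (x, t) = 0 := fun t =>
        Set.indicator_of_notMem (fun hc => hxs hc.1) _
      simp [this]
  simp_rw [hslice]
  rw [lintegral_indicator hs]

lemma deriv_sq_integrableOn {a b : ℝ} (hab : a < b) {f : ℝ → ℝ}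
    (hf : ContDiffOn ℝ 1 f (Icc a b)) :
    IntegrableOn (fun t => (deriv f t)^2) (Ioo a b) := by
  have hgc : ContinuousOn (derivWithin f (Icc a b)) (Icc a b) :=
    hf.continuousOn_derivWithin (uniqueDiffOn_Icc hab) le_rfl
  have hI : IntegrableOn (fun t => (derivWithin f (Icc a b) t)^2) (Ioo a b) :=
    ((hgc.pow 2).integrableOn_Icc).mono_set Ioo_subset_Icc_self
  apply hI.congr_fun ?_ measurableSet_Ioo
  intro t ht
  simp only [derivWithin_of_mem_nhds (Icc_mem_nhds ht.1 ht.2)]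


/-- Poincaré-type inequality in a thin region between two graphs of thickness at
most `δ̄`, for functions vanishing on the lower boundary graph:
`∫_Ω w² ≤ δ̄² ∫_Ω (∂_t w)²`. -/
theorem stmt12 (d : ℕ) (hd : 2 ≤ d)
    (s : Set (EuclideanSpace ℝ (Fin (d - 1)))) (hs : MeasurableSet s)
    (h H : EuclideanSpace ℝ (Fin (d - 1)) → ℝ)
    (hmh : Measurable h) (hmH : Measurable H)
    (hle : ∀ x ∈ s, h x ≤ H x)
    (δbar : ℝ) (hδ0 : 0 ≤ δbar) (hδ : ∀ x ∈ s, H x - h x ≤ δbar)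
    (w : (EuclideanSpace ℝ (Fin (d - 1)) × ℝ) → ℝ) (hw : Measurable w)
    (hC1 : ∀ x ∈ s, ContDiffOn ℝ 1 (fun t => w (x, t)) (Set.Icc (h x) (H x)))
    (h0 : ∀ x ∈ s, w (x, h x) = 0)
    (hint : MeasureTheory.IntegrableOn
      (fun p => (deriv (fun t => w (p.1, t)) p.2) ^ 2)
      {p : EuclideanSpace ℝ (Fin (d - 1)) × ℝ | p.1 ∈ s ∧ h p.1 < p.2 ∧ p.2 < H p.1}) :
    (∫ p in {p : EuclideanSpace ℝ (Fin (d - 1)) × ℝ | p.1 ∈ s ∧ h p.1 < p.2 ∧ p.2 < H p.1},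
        (w p) ^ 2) ≤
      δbar ^ 2 *
        ∫ p in {p : EuclideanSpace ℝ (Fin (d - 1)) × ℝ | p.1 ∈ s ∧ h p.1 < p.2 ∧ p.2 < H p.1},
          (deriv (fun t => w (p.1, t)) p.2) ^ 2 := by
  set Ω : Set (EuclideanSpace ℝ (Fin (d - 1)) × ℝ) :=
    {p | p.1 ∈ s ∧ h p.1 < p.2 ∧ p.2 < H p.1} with hΩdef
  -- real slice inequality
  have hslice : ∀ x ∈ s,
      ∫ t in Ioo (h x) (H x), (w (x, t))^2 ≤
        δbar^2 * ∫ t in Ioo (h x) (H x), (deriv (fun t => w (x, t)) t)^2 :=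
    fun x hx => slice_poincare (hle x hx) (hδ x hx) hδ0 (hC1 x hx) (h0 x hx)
  -- ENNReal slice inequality
  have hsliceE : ∀ x ∈ s,
      ∫⁻ t in Ioo (h x) (H x), ENNReal.ofReal ((w (x, t))^2) ≤
        ENNReal.ofReal (δbar^2) *
          ∫⁻ t in Ioo (h x) (H x), ENNReal.ofReal ((deriv (fun t => w (x, t)) t)^2) := by
    intro x hx
    rcases eq_or_lt_of_le (hle x hx) with heq | hlt
    · simp [← heq]
    · have hfi : IntegrableOn (fun t => (w (x, t))^2) (Ioo (h x) (H x)) :=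
        (((hC1 x hx).continuousOn.pow 2).integrableOn_Icc).mono_set Ioo_subset_Icc_self
      have hgi := deriv_sq_integrableOn hlt (hC1 x hx)
      rw [← ofReal_integral_eq_lintegral_ofReal hfi
          (Filter.Eventually.of_forall fun t => sq_nonneg _),
        ← ofReal_integral_eq_lintegral_ofReal hgi
          (Filter.Eventually.of_forall fun t => sq_nonneg _),
        ← ENNReal.ofReal_mul (sq_nonneg δbar)]
      exact ENNReal.ofReal_le_ofReal (hslice x hx)
  -- Tonelli
  have hWaem : AEMeasurable (fun p => ENNReal.ofReal ((w p)^2))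
      ((volume : Measure (EuclideanSpace ℝ (Fin (d - 1)) × ℝ)).restrict Ω) :=
    ((hw.pow_const 2).ennreal_ofReal).aemeasurable
  have hGaem : AEMeasurable (fun p => ENNReal.ofReal ((deriv (fun t => w (p.1, t)) p.2)^2))
      ((volume : Measure (EuclideanSpace ℝ (Fin (d - 1)) × ℝ)).restrict Ω) :=
    hint.1.aemeasurable.ennreal_ofReal
  have hA := tonelli_aux hs hmh hmH _ hWaem
  have hB := tonelli_aux hs hmh hmH _ hGaem
  have hAB : (∫⁻ p in Ω, ENNReal.ofReal ((w p)^2)) ≤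
      ENNReal.ofReal (δbar^2) *
        ∫⁻ p in Ω, ENNReal.ofReal ((deriv (fun t => w (p.1, t)) p.2)^2) := by
    rw [hA, hB, ← lintegral_const_mul' _ _ ENNReal.ofReal_ne_top]
    apply lintegral_mono_ae
    filter_upwards [ae_restrict_mem hs] with x hx
    exact hsliceE x hx
  set A : ℝ≥0∞ := ∫⁻ p in Ω, ENNReal.ofReal ((w p)^2) with hAdef
  set B : ℝ≥0∞ := ∫⁻ p in Ω, ENNReal.ofReal ((deriv (fun t => w (p.1, t)) p.2)^2) with hBdef
  have hBeq : B = ENNReal.ofReal (∫ p in Ω, (deriv (fun t => w (p.1, t)) p.2)^2) :=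
    (ofReal_integral_eq_lintegral_ofReal hint
      (Filter.Eventually.of_forall fun p => sq_nonneg _)).symm
  have hBfin : B ≠ ⊤ := by rw [hBeq]; exact ENNReal.ofReal_ne_top
  have hAfin : A ≠ ⊤ :=
    ne_top_of_le_ne_top (ENNReal.mul_ne_top ENNReal.ofReal_ne_top hBfin) hAB
  have hwm : AEStronglyMeasurable (fun p => (w p)^2)
      ((volume : Measure (EuclideanSpace ℝ (Fin (d - 1)) × ℝ)).restrict Ω) :=
    (hw.pow_const 2).aestronglyMeasurable
  have hLHS : ∫ p in Ω, (w p)^2 = A.toReal := by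
    rw [integral_eq_lintegral_of_nonneg_ae (Filter.Eventually.of_forall fun p => sq_nonneg _) hwm]
  have hG0 : 0 ≤ ∫ p in Ω, (deriv (fun t => w (p.1, t)) p.2)^2 :=
    integral_nonneg fun p => sq_nonneg _
  have hRHS : ∫ p in Ω, (deriv (fun t => w (p.1, t)) p.2)^2 = B.toReal := by
    rw [hBeq, ENNReal.toReal_ofReal hG0]
  rw [hLHS, hRHS]
  calc A.toReal ≤ (ENNReal.ofReal (δbar^2) * B).toReal :=
        ENNReal.toReal_mono (ENNReal.mul_ne_top ENNReal.ofReal_ne_top hBfin) hAB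
    _ = δbar^2 * B.toReal := by
        rw [ENNReal.toReal_mul, ENNReal.toReal_ofReal (sq_nonneg _)]
end
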